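/- arXiv:1912.12364 — 6 statements merged into one kernel-verified Lean document; each statement's English description precedes it below -/
import Mathlib

section
/- Let Ω be a g×g complex symmetric matrix whose imaginary part is positive definite. Then the square of the Gaussian integral ∫_{ℝ^g} exp(πi xᵀΩx) dx equals 1/det(-iΩ). -/
/-!
Integrate out the first coordinate. Completing the square in `x₀` turns the inner integral into a
one-dimensional complex Gaussian integral, which contributes the factor `(-i Ω₀₀)^(-1/2)`, times
the integrand for the Schur complement `S` of `Ω₀₀`. Since `S` is again symmetric with positive
definite imaginary part (by Cauchy–Schwarz for `Im Ω`) and `det Ω = Ω₀₀ det S`, the formula follows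
by induction on `g`. Integrability comes from the bound `Im Ω ≥ c • 1` with `c > 0`.
-/

open MeasureTheory Matrix Complex Real

section QuadraticForm

variable {ι : Type*} [Fintype ι]

theorem im_dotProduct_mulVec_ofReal (M : Matrix ι ι ℂ) (x : ι → ℝ) :
    ((fun i => (x i : ℂ)) ⬝ᵥ (M *ᵥ fun i => (x i : ℂ))).im = x ⬝ᵥ (M.map im *ᵥ x) := by
  simp [dotProduct, mulVec, im_sum, Finset.mul_sum]

theorem Matrix.PosDef.exists_pos_mul_dotProduct_self_le {Y : Matrix ι ι ℝ} (hY : Y.PosDef) :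
    ∃ c, 0 < c ∧ ∀ x : ι → ℝ, c * (x ⬝ᵥ x) ≤ x ⬝ᵥ (Y *ᵥ x) := by
  rcases isEmpty_or_nonempty ι with hι | hι
  · exact ⟨1, one_pos, fun x => by simp [dotProduct]⟩
  obtain ⟨u, hu, hmin⟩ := (isCompact_sphere (0 : ι → ℝ) 1).exists_isMinOn
    (NormedSpace.sphere_nonempty.mpr zero_le_one)
    (by fun_prop : Continuous fun x : ι → ℝ => x ⬝ᵥ (Y *ᵥ x)).continuousOn
  set m := u ⬝ᵥ (Y *ᵥ u)
  have hm : 0 < m := by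
    simpa using hY.dotProduct_mulVec_pos (ne_zero_of_mem_unit_sphere ⟨u, hu⟩)
  refine ⟨m / Fintype.card ι, by positivity, fun x => ?_⟩
  rcases eq_or_ne x 0 with rfl | hx
  · simp
  have hx' : 0 < ‖x‖ := norm_pos_iff.mpr hx
  have hsphere : ‖x‖⁻¹ • x ∈ Metric.sphere (0 : ι → ℝ) 1 := by
    simp [norm_smul, hx'.ne']
  have hscale : (‖x‖⁻¹ • x) ⬝ᵥ (Y *ᵥ (‖x‖⁻¹ • x)) = ‖x‖⁻¹ ^ 2 * (x ⬝ᵥ (Y *ᵥ x)) := by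
    simp only [mulVec_smul, smul_dotProduct, dotProduct_smul, smul_eq_mul]
    ring
  have hsum : x ⬝ᵥ x ≤ Fintype.card ι * ‖x‖ ^ 2 :=
    calc x ⬝ᵥ x = ∑ i, ‖x i‖ ^ 2 := by simp [dotProduct, sq]
      _ ≤ ∑ _i : ι, ‖x‖ ^ 2 := by gcongr with i; exact norm_le_pi_norm x i
      _ = _ := by simp
  calc m / Fintype.card ι * (x ⬝ᵥ x) ≤ m * ‖x‖ ^ 2 := by
        rw [div_mul_eq_mul_div, div_le_iff₀ (by positivity)]
        nlinarith
    _ ≤ ‖x‖⁻¹ ^ 2 * (x ⬝ᵥ (Y *ᵥ x)) * ‖x‖ ^ 2 := by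
        gcongr
        simpa [hscale] using hmin hsphere
    _ = x ⬝ᵥ (Y *ᵥ x) := by field_simp

noncomputable def gaussianIntegrand (Ω : Matrix ι ι ℂ) (x : ι → ℝ) : ℂ :=
  cexp (π * I * ((fun i => (x i : ℂ)) ⬝ᵥ (Ω *ᵥ fun i => (x i : ℂ))))

theorem norm_gaussianIntegrand (Ω : Matrix ι ι ℂ) (x : ι → ℝ) :
    ‖gaussianIntegrand Ω x‖ = rexp (-π * (x ⬝ᵥ (Ω.map im *ᵥ x))) := by
  rw [gaussianIntegrand, norm_exp, ← im_dotProduct_mulVec_ofReal]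
  simp [mul_re]

theorem integrable_gaussianIntegrand {Ω : Matrix ι ι ℂ} (hpos : (Ω.map im).PosDef) :
    Integrable (gaussianIntegrand Ω) := by
  obtain ⟨c, hc, hcoer⟩ := hpos.exists_pos_mul_dotProduct_self_le
  have hprod : Integrable fun x : ι → ℝ => ∏ i, rexp (-(π * c) * x i ^ 2) :=
    Integrable.fintype_prod fun _ => integrable_exp_neg_mul_sq (by positivity)
  refine hprod.mono' (by unfold gaussianIntegrand; fun_prop) (ae_of_all _ fun x => ?_)
  rw [norm_gaussianIntegrand, ← Real.exp_sum, Real.exp_le_exp, ← Finset.mul_sum]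
  have hsq : x ⬝ᵥ x = ∑ i, x i ^ 2 := by simp [dotProduct, sq]
  have := mul_le_mul_of_nonneg_left (hcoer x) pi_pos.le
  rw [hsq] at this
  linarith

end QuadraticForm

theorem Complex.im_sq_div_le (z : ℂ) {w : ℂ} (hw : 0 < w.im) :
    (z ^ 2 / w).im ≤ z.im ^ 2 / w.im := by
  have hw' : 0 < normSq w := normSq_pos.mpr fun h => by simp [h] at hw
  rw [div_eq_mul_inv, mul_im, inv_re, inv_im, sq, mul_re, mul_im, le_div_iff₀ hw]
  rw [normSq_apply] at *
  field_simp
  nlinarith [sq_nonneg (z.im * w.re - z.re * w.im)]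

theorem integral_fin_succ_eq_integral_integral_cons {E : Type*} [NormedAddCommGroup E]
    [NormedSpace ℝ E] {n : ℕ} {f : (Fin (n + 1) → ℝ) → E} (hf : Integrable f) :
    ∫ x, f x = ∫ y : Fin n → ℝ, ∫ t : ℝ, f (Fin.cons t y) := by
  set e := (MeasurableEquiv.piFinSuccAbove (fun _ : Fin (n + 1) => ℝ) 0).symm
  have hmp : MeasurePreserving e := (volume_preserving_piFinSuccAbove _ 0).symm
  have he (p : ℝ × (Fin n → ℝ)) : e p = Fin.cons p.1 p.2 := by simp [e, Fin.consEquiv]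
  have hfe : Integrable (f ∘ e) := (hmp.integrable_comp_emb e.measurableEmbedding).mpr hf
  rw [← hmp.integral_comp' f]
  exact (integral_prod_symm _ hfe).trans (by simp only [Function.comp_apply, he])

section SchurComplement

variable {n : ℕ}

theorem Matrix.dotProduct_mulVec_cons {R : Type*} [CommRing R]
    {M : Matrix (Fin (n + 1)) (Fin (n + 1)) R} (hM : M.IsSymm) (t : R) (y : Fin n → R) :
    Fin.cons t y ⬝ᵥ (M *ᵥ Fin.cons t y) =
      M 0 0 * t ^ 2 + 2 * (Fin.tail (M 0) ⬝ᵥ y) * t +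
        y ⬝ᵥ (M.submatrix Fin.succ Fin.succ *ᵥ y) := by
  have hrow0 : (M *ᵥ Fin.cons t y) 0 = M 0 0 * t + Fin.tail (M 0) ⬝ᵥ y := by
    simp [mulVec, dotProduct, Fin.sum_univ_succ, Fin.tail]
  have hrow (i : Fin n) :
      (M *ᵥ Fin.cons t y) i.succ = M 0 i.succ * t + (M.submatrix Fin.succ Fin.succ *ᵥ y) i := by
    simp [mulVec, dotProduct, Fin.sum_univ_succ, hM.apply 0 i.succ]
  have hcross : ∑ i, y i * (M 0 i.succ * t) = (Fin.tail (M 0) ⬝ᵥ y) * t := by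
    simp only [dotProduct, Finset.sum_mul, Fin.tail]
    exact Finset.sum_congr rfl fun i _ => by ring
  rw [dotProduct, Fin.sum_univ_succ]
  simp only [Fin.cons_zero, Fin.cons_succ, hrow0, hrow, mul_add, Finset.sum_add_distrib, hcross]
  rw [← dotProduct]
  ring

/-- Strict Cauchy–Schwarz for the inner product `Y`, applied to `e₀` and `Fin.cons 0 y`. -/
theorem Matrix.PosDef.sq_dotProduct_tail_lt {Y : Matrix (Fin (n + 1)) (Fin (n + 1)) ℝ}
    (hY : Y.PosDef) {y : Fin n → ℝ} (hy : y ≠ 0) :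
    (Fin.tail (Y 0) ⬝ᵥ y) ^ 2 < Y 0 0 * (y ⬝ᵥ (Y.submatrix Fin.succ Fin.succ *ᵥ y)) := by
  set q := Fin.tail (Y 0) ⬝ᵥ y
  have hγ : 0 < Y 0 0 := hY.diag_pos
  have hv : (Fin.cons (-q) (Y 0 0 • y) : Fin (n + 1) → ℝ) ≠ 0 := fun h =>
    hy (smul_eq_zero.mp (cons_eq_zero_iff.mp h).2 |>.resolve_left hγ.ne')
  have hpos := hY.dotProduct_mulVec_pos hv
  rw [star_trivial, dotProduct_mulVec_cons (isHermitian_iff_isSymm.mp hY.isHermitian),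
    dotProduct_smul, mulVec_smul, smul_dotProduct, dotProduct_smul] at hpos
  simp only [smul_eq_mul] at hpos
  nlinarith

variable {K : Type*} [Field K]

def Matrix.schurComplement₀₀ (M : Matrix (Fin (n + 1)) (Fin (n + 1)) K) :
    Matrix (Fin n) (Fin n) K :=
  of fun i j => M i.succ j.succ - M i.succ 0 * M 0 j.succ / M 0 0

theorem Matrix.IsSymm.schurComplement₀₀ {M : Matrix (Fin (n + 1)) (Fin (n + 1)) K}
    (hM : M.IsSymm) : M.schurComplement₀₀.IsSymm :=
  IsSymm.ext fun i j => by
    simp only [Matrix.schurComplement₀₀, of_apply, hM.apply j.succ i.succ, hM.apply 0 i.succ,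
      hM.apply 0 j.succ]
    ring

theorem Matrix.dotProduct_mulVec_schurComplement₀₀ {M : Matrix (Fin (n + 1)) (Fin (n + 1)) K}
    (hM : M.IsSymm) (y : Fin n → K) :
    y ⬝ᵥ (M.schurComplement₀₀ *ᵥ y) =
      y ⬝ᵥ (M.submatrix Fin.succ Fin.succ *ᵥ y) - (Fin.tail (M 0) ⬝ᵥ y) ^ 2 / M 0 0 := by
  have hsq : (Fin.tail (M 0) ⬝ᵥ y) ^ 2 / M 0 0 =
      ∑ i, y i * ∑ j, M i.succ 0 * M 0 j.succ / M 0 0 * y j := by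
    rw [sq, dotProduct, Finset.sum_mul_sum, Finset.sum_div]
    refine Finset.sum_congr rfl fun i _ => ?_
    rw [Finset.mul_sum, Finset.sum_div]
    refine Finset.sum_congr rfl fun j _ => ?_
    rw [Fin.tail, Fin.tail, hM.apply 0 i.succ]
    ring
  rw [hsq]
  simp only [dotProduct, mulVec, schurComplement₀₀, of_apply, submatrix_apply, sub_mul,
    Finset.sum_sub_distrib, mul_sub]

theorem Matrix.det_eq_mul_det_schurComplement₀₀ {M : Matrix (Fin (n + 1)) (Fin (n + 1)) K}
    (h : M 0 0 ≠ 0) : M.det = M 0 0 * M.schurComplement₀₀.det := by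
  set c : Fin (n + 1) → K := Fin.cons 0 fun i => M i.succ 0 / M 0 0
  set N : Matrix (Fin (n + 1)) (Fin (n + 1)) K := of fun i j => M i j - c i * M 0 j
  have hN0 (j) : N 0 j = M 0 j := by simp [N, c]
  rw [det_eq_of_forall_row_eq_smul_add_const c 0 rfl (B := N) fun i j => by simp [N, hN0],
    det_succ_column_zero, Fin.sum_univ_succ]
  have hcol (i : Fin n) : N i.succ 0 = 0 := by
    simp [N, c]
    field_simp
    ring
  have hminor : N.submatrix Fin.succ Fin.succ = M.schurComplement₀₀ := by
    ext i j
    simp [N, c, schurComplement₀₀]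
    ring
  simp [hcol, hN0, hminor]

theorem Matrix.PosDef.im_schurComplement₀₀ {Ω : Matrix (Fin (n + 1)) (Fin (n + 1)) ℂ}
    (hsym : Ω.IsSymm) (hpos : (Ω.map im).PosDef) : (Ω.schurComplement₀₀.map im).PosDef := by
  refine .of_dotProduct_mulVec_pos (isHermitian_iff_isSymm.mpr (hsym.schurComplement₀₀.map _))
    fun y hy => ?_
  have hγ : 0 < (Ω 0 0).im := hpos.diag_pos
  have hβ : (Fin.tail (Ω 0) ⬝ᵥ fun i => (y i : ℂ)).im = Fin.tail ((Ω.map im) 0) ⬝ᵥ y := by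
    simp [dotProduct, im_sum, Fin.tail]
  rw [star_trivial, ← im_dotProduct_mulVec_ofReal, dotProduct_mulVec_schurComplement₀₀ hsym,
    sub_im, im_dotProduct_mulVec_ofReal, sub_pos]
  calc _ ≤ (Fin.tail (Ω 0) ⬝ᵥ fun i => (y i : ℂ)).im ^ 2 / (Ω 0 0).im := im_sq_div_le _ hγ
    _ < _ := by
      rw [hβ, div_lt_iff₀ hγ, mul_comm]
      exact hpos.sq_dotProduct_tail_lt hy

theorem integral_gaussianIntegrand_succ {Ω : Matrix (Fin (n + 1)) (Fin (n + 1)) ℂ}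
    (hsym : Ω.IsSymm) (hpos : (Ω.map im).PosDef) :
    ∫ x, gaussianIntegrand Ω x =
      (π / -(π * I * Ω 0 0)) ^ (1 / 2 : ℂ) * ∫ y, gaussianIntegrand Ω.schurComplement₀₀ y := by
  have hγ : 0 < (Ω 0 0).im := hpos.diag_pos
  have ha : Ω 0 0 ≠ 0 := fun h => by simp [h] at hγ
  have hre : (π * I * Ω 0 0).re < 0 := by simpa [mul_re] using mul_pos pi_pos hγ
  rw [integral_fin_succ_eq_integral_integral_cons (integrable_gaussianIntegrand hpos),
    ← integral_const_mul]
  refine integral_congr_ae (ae_of_all _ fun y => ?_)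
  have hcoe (t : ℝ) : (fun i => ((Fin.cons t y : Fin (n + 1) → ℝ) i : ℂ)) =
      Fin.cons (t : ℂ) fun i => (y i : ℂ) := Fin.comp_cons ofReal t y
  simp only [gaussianIntegrand, hcoe, dotProduct_mulVec_cons hsym, mul_add, ← mul_assoc]
  rw [integral_cexp_quadratic hre, dotProduct_mulVec_schurComplement₀₀ hsym]
  congr 2
  field_simp
  ring

end SchurComplement

/-- The square of the Gaussian integral over ℝ^g equals 1/det(-iΩ), for Ω in the
Siegel upper half-space (complex symmetric with positive definite imaginary part). -/
theorem gaussian_integral_sq (g : ℕ) (Ω : Matrix (Fin g) (Fin g) ℂ)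
    (hsym : Ω.IsSymm) (hpos : (Ω.map Complex.im).PosDef) :
    (∫ x : Fin g → ℝ, Complex.exp ((Real.pi : ℂ) * Complex.I *
      ((fun i => (x i : ℂ)) ⬝ᵥ (Ω *ᵥ fun i => (x i : ℂ))))) ^ 2
      = 1 / ((-Complex.I) • Ω).det := by
  change (∫ x, gaussianIntegrand Ω x) ^ 2 = _
  induction g with
  | zero => simp [gaussianIntegrand, Measure.real, volume_pi]
  | succ n ih =>
    have ha : Ω 0 0 ≠ 0 := fun h => by simpa [h] using hpos.diag_pos (i := 0)
    have hw : (π : ℂ) / -(π * I * Ω 0 0) = 1 / (-I * Ω 0 0) := by field_simp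
    rw [integral_gaussianIntegrand_succ hsym hpos, mul_pow, one_div, cpow_ofNat_inv_pow,
      ih _ hsym.schurComplement₀₀ (hpos.im_schurComplement₀₀ hsym), hw, det_smul, det_smul,
      det_eq_mul_det_schurComplement₀₀ ha, Fintype.card_fin, Fintype.card_fin]
    ring
end

section
/- Let Ω be a g×g complex symmetric matrix with positive definite imaginary part, and let c ∈ ℂ^g. Then ∫_{ℝ^g} exp(πi (x+c)ᵀΩ(x+c)) dx = ∫_{ℝ^g} exp(πi xᵀΩx) dx; that is, the shifted Gaussian integral is independent of the complex shift c. -/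
/-!
Integrate out one coordinate `x_j` at a time. On every line parallel to `e_j` the integrand is
`exp (b t ^ 2 + β t + γ)` with `Re b = -π (Im Ω)_jj < 0`, and by the closed form of this
one-dimensional integral it does not change when `t` is translated by a complex number; so the
`j`-th coordinate of the shift can be removed. Fubini is legitimate because coercivity of the
positive definite matrix `Im Ω` dominates `|exp (π i (x + w)ᵀ Ω (x + w))|` by a real Gaussian.
-/

open MeasureTheory Matrix Complex Real

theorem integral_cexp_quadratic_comp_add_const {b : ℂ} (hb : b.re < 0) (β γ s : ℂ) :
    ∫ t : ℝ, cexp (b * (t + s) ^ 2 + β * (t + s) + γ) = ∫ t : ℝ, cexp (b * t ^ 2 + β * t + γ) := by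
  have hb0 : b ≠ 0 := by rintro rfl; simp at hb
  have hexpand : ∀ t : ℂ, b * (t + s) ^ 2 + β * (t + s) + γ
      = b * t ^ 2 + (2 * b * s + β) * t + (b * s ^ 2 + β * s + γ) := fun t => by ring
  simp_rw [hexpand, integral_cexp_quadratic hb]
  congr 2
  field_simp
  ring

theorem integral_eq_integral_integral_insertNth {α E : Type*} [MeasureSpace α]
    [SigmaFinite (volume : Measure α)] [NormedAddCommGroup E] [NormedSpace ℝ E] {n : ℕ}
    {f : (Fin (n + 1) → α) → E} (hf : Integrable f) (j : Fin (n + 1)) :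
    ∫ x, f x = ∫ y : Fin n → α, ∫ t : α, f (j.insertNth t y) := by
  have e := (volume_preserving_piFinSuccAbove (fun _ : Fin (n + 1) => α) j).symm
  rw [← e.integral_comp', Measure.volume_eq_prod, integral_prod_symm]
  · rfl
  · exact (e.integrable_comp_emb (MeasurableEquiv.measurableEmbedding _)).2 hf

theorem exists_pos_mul_norm_sq_le {E : Type*} [NormedAddCommGroup E] [NormedSpace ℝ E]
    [FiniteDimensional ℝ E] {q : E → ℝ} (hq : Continuous q)
    (hsmul : ∀ (t : ℝ) (x : E), q (t • x) = t ^ 2 * q x) (hpos : ∀ x ≠ 0, 0 < q x) :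
    ∃ ε > 0, ∀ x, ε * ‖x‖ ^ 2 ≤ q x := by
  have hq0 : q 0 = 0 := by simpa using hsmul 0 0
  rcases subsingleton_or_nontrivial E with hE | hE
  · exact ⟨1, one_pos, fun x => by simp [Subsingleton.elim x 0, hq0]⟩
  obtain ⟨x₀, hx₀, hmin⟩ := (isCompact_sphere (0 : E) 1).exists_isMinOn
    (NormedSpace.sphere_nonempty.2 zero_le_one) hq.continuousOn
  refine ⟨q x₀, hpos x₀ (ne_zero_of_mem_unit_sphere ⟨x₀, hx₀⟩), fun x => ?_⟩
  rcases eq_or_ne x 0 with rfl | hx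
  · simp [hq0]
  have hunit : ‖x‖⁻¹ • x ∈ Metric.sphere (0 : E) 1 := by
    simp [norm_smul, hx]
  calc q x₀ * ‖x‖ ^ 2 ≤ q (‖x‖⁻¹ • x) * ‖x‖ ^ 2 := by gcongr; exact hmin hunit
    _ = q x := by rw [hsmul]; field_simp

theorem norm_cexp_pi_mul_I_mul (z : ℂ) : ‖cexp (π * I * z)‖ = Real.exp (-(π * z.im)) := by
  simp [Complex.norm_exp]

section FiniteIndex

variable {ι : Type*} [Fintype ι]

theorem Matrix.PosDef.exists_pos_mul_dotProduct_self_le_s1 {A : Matrix ι ι ℝ} (hA : A.PosDef) :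
    ∃ ε > 0, ∀ x : ι → ℝ, ε * (x ⬝ᵥ x) ≤ x ⬝ᵥ (A *ᵥ x) := by
  obtain ⟨ε, hε, hle⟩ := exists_pos_mul_norm_sq_le (E := EuclideanSpace ℝ ι)
    (q := fun y => y.ofLp ⬝ᵥ (A *ᵥ y.ofLp)) (by fun_prop)
    (fun t y => by simp [mulVec_smul]; ring)
    (fun y hy => by simpa using hA.dotProduct_mulVec_pos (x := y.ofLp) (by simpa using hy))
  refine ⟨ε, hε, fun x => ?_⟩
  have hx := hle (WithLp.toLp 2 x)
  rw [EuclideanSpace.real_norm_sq_eq] at hx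
  simpa [dotProduct, sq] using hx

theorem dotProduct_mulVec_add_add {R : Type*} [CommRing R] (A : Matrix ι ι R) (v w : ι → R) :
    (v + w) ⬝ᵥ (A *ᵥ (v + w)) = v ⬝ᵥ (A *ᵥ v) + v ⬝ᵥ ((A + Aᵀ) *ᵥ w) + w ⬝ᵥ (A *ᵥ w) := by
  have hT : v ⬝ᵥ (Aᵀ *ᵥ w) = w ⬝ᵥ (A *ᵥ v) := by
    rw [dotProduct_mulVec, vecMul_transpose, dotProduct_comm]
  rw [add_mulVec, dotProduct_add, hT, mulVec_add, dotProduct_add, add_dotProduct, add_dotProduct]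
  ring

theorem dotProduct_mulVec_add_smul_single {R : Type*} [DecidableEq ι] [CommRing R]
    (A : Matrix ι ι R) (v : ι → R) (j : ι) (s : R) :
    (v + s • Pi.single j 1) ⬝ᵥ (A *ᵥ (v + s • Pi.single j 1))
      = A j j * s ^ 2 + v ⬝ᵥ (A + Aᵀ).col j * s + v ⬝ᵥ (A *ᵥ v) := by
  rw [dotProduct_mulVec_add_add, mulVec_smul, mulVec_smul, dotProduct_smul, smul_dotProduct,
    dotProduct_smul, single_dotProduct]
  simp only [mulVec_single_one, col_apply, smul_eq_mul, one_mul]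
  ring

theorem im_ofReal_dotProduct (x : ι → ℝ) (v : ι → ℂ) :
    ((fun i => (x i : ℂ)) ⬝ᵥ v).im = x ⬝ᵥ fun i => (v i).im := by
  simp [dotProduct, Complex.im_sum]

theorem im_mulVec_ofReal (A : Matrix ι ι ℂ) (x : ι → ℝ) :
    (fun i => ((A *ᵥ fun i => (x i : ℂ)) i).im) = A.map Complex.im *ᵥ x := by
  ext i
  simp [mulVec, dotProduct, Complex.im_sum]

noncomputable def shiftedGaussian (Ω : Matrix ι ι ℂ) (w : ι → ℂ) (x : ι → ℝ) : ℂ :=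
  cexp (π * I * ((fun i => (x i : ℂ) + w i) ⬝ᵥ (Ω *ᵥ fun i => (x i : ℂ) + w i)))

theorem im_shifted_dotProduct_mulVec (Ω : Matrix ι ι ℂ) (w : ι → ℂ) (x : ι → ℝ) :
    ((fun i => (x i : ℂ) + w i) ⬝ᵥ (Ω *ᵥ fun i => (x i : ℂ) + w i)).im
      = x ⬝ᵥ (Ω.map Complex.im *ᵥ x) + x ⬝ᵥ (fun i => (((Ω + Ωᵀ) *ᵥ w) i).im)
        + (w ⬝ᵥ (Ω *ᵥ w)).im := by
  rw [show (fun i => (x i : ℂ) + w i) = (fun i => (x i : ℂ)) + w from rfl,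
    dotProduct_mulVec_add_add, add_im, add_im, im_ofReal_dotProduct, im_ofReal_dotProduct,
    im_mulVec_ofReal]

theorem integrable_shiftedGaussian {Ω : Matrix ι ι ℂ} (hpos : (Ω.map Complex.im).PosDef)
    (w : ι → ℂ) : Integrable (shiftedGaussian Ω w) := by
  obtain ⟨ε, hε, hcoercive⟩ := hpos.exists_pos_mul_dotProduct_self_le_s1
  set r : ι → ℝ := fun i => (((Ω + Ωᵀ) *ᵥ w) i).im
  set K : ℝ := (w ⬝ᵥ (Ω *ᵥ w)).im
  have hgauss : Integrable fun x : ι → ℝ =>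
      cexp (-(π * ε : ℝ) * ∑ i, (x i : ℂ) ^ 2 + ∑ i, (-(π * r i) : ℝ) * (x i : ℂ))
        * cexp (-(π * K) : ℝ) :=
    (GaussianFourier.integrable_cexp_neg_mul_sum_add (by simp; positivity) _).mul_const _
  refine hgauss.mono (by unfold shiftedGaussian; fun_prop) (.of_forall fun x => ?_)
  have hexponent : -(π * ε : ℝ) * ∑ i, (x i : ℂ) ^ 2 + ∑ i, (-(π * r i) : ℝ) * (x i : ℂ)
      = (-(π * ε) * (x ⬝ᵥ x) - π * (x ⬝ᵥ r) : ℝ) := by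
    simp only [dotProduct]
    push_cast
    simp only [Finset.mul_sum, ← Finset.sum_sub_distrib, ← Finset.sum_add_distrib]
    exact Finset.sum_congr rfl fun i _ => by ring
  rw [shiftedGaussian, norm_cexp_pi_mul_I_mul, im_shifted_dotProduct_mulVec, norm_mul,
    Complex.norm_exp, Complex.norm_exp, hexponent, ofReal_re, ofReal_re, ← Real.exp_add]
  gcongr
  nlinarith [hcoercive x, pi_pos]

end FiniteIndex

theorem integral_shiftedGaussian_add_single {n : ℕ} {Ω : Matrix (Fin (n + 1)) (Fin (n + 1)) ℂ}
    (hpos : (Ω.map Complex.im).PosDef) (w : Fin (n + 1) → ℂ) (j : Fin (n + 1)) (s : ℂ) :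
    ∫ x, shiftedGaussian Ω (w + Pi.single j s) x = ∫ x, shiftedGaussian Ω w x := by
  set v : (Fin n → ℝ) → Fin (n + 1) → ℂ :=
    fun y => (fun i => ((j.insertNth 0 y : Fin (n + 1) → ℝ) i : ℂ)) + w
  have hslice : ∀ (s : ℂ) y (t : ℝ), shiftedGaussian Ω (w + Pi.single j s) (j.insertNth t y)
      = cexp (π * I * Ω j j * (t + s) ^ 2 + π * I * (v y ⬝ᵥ (Ω + Ωᵀ).col j) * (t + s)
          + π * I * (v y ⬝ᵥ (Ω *ᵥ v y))) := by
    intro s y t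
    have hline : (fun i => ((j.insertNth t y : Fin (n + 1) → ℝ) i : ℂ)
        + (w + Pi.single j s : Fin (n + 1) → ℂ) i) = v y + ((t : ℂ) + s) • Pi.single j 1 := by
      ext i
      induction i using j.succAboveCases
      · simp [v]
        ring
      · simp [v]
    rw [shiftedGaussian, hline, dotProduct_mulVec_add_smul_single]
    ring_nf
  have hslice_zero := hslice 0
  simp only [Pi.single_zero, add_zero] at hslice_zero
  have hb : (π * I * Ω j j).re < 0 := by
    simpa [pi_pos] using hpos.diag_pos (i := j)
  rw [integral_eq_integral_integral_insertNth (integrable_shiftedGaussian hpos _) j,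
    integral_eq_integral_integral_insertNth (integrable_shiftedGaussian hpos _) j]
  congr 1
  funext y
  simp only [hslice, hslice_zero]
  exact integral_cexp_quadratic_comp_add_const hb _ _ s

theorem gaussian_integral_shift_general (g : ℕ) (Ω : Matrix (Fin g) (Fin g) ℂ)
    (hpos : (Ω.map Complex.im).PosDef) (c : Fin g → ℂ) :
    (∫ x : Fin g → ℝ, Complex.exp ((Real.pi : ℂ) * Complex.I *
      ((fun i => (x i : ℂ) + c i) ⬝ᵥ (Ω *ᵥ fun i => (x i : ℂ) + c i))))
      = ∫ x : Fin g → ℝ, Complex.exp ((Real.pi : ℂ) * Complex.I *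
      ((fun i => (x i : ℂ)) ⬝ᵥ (Ω *ᵥ fun i => (x i : ℂ)))) := by
  rcases g with _ | n
  · simp [Subsingleton.elim c 0]
  have hpartial : ∀ s : Finset (Fin (n + 1)),
      ∫ x, shiftedGaussian Ω (∑ i ∈ s, Pi.single i (c i)) x = ∫ x, shiftedGaussian Ω 0 x := by
    intro s
    induction s using Finset.induction_on with
    | empty => simp
    | insert j s hj ih =>
      rw [Finset.sum_insert hj, add_comm _ (∑ i ∈ s, Pi.single i (c i)),
        integral_shiftedGaussian_add_single hpos, ih]
  simpa [shiftedGaussian, Finset.univ_sum_single] using hpartial Finset.univ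

/-- The shifted Gaussian integral over ℝ^g is independent of the complex shift c,
for Ω complex symmetric with positive definite imaginary part. -/
theorem gaussian_integral_shift (g : ℕ) (Ω : Matrix (Fin g) (Fin g) ℂ)
    (hsym : Ω.IsSymm) (hpos : (Ω.map Complex.im).PosDef) (c : Fin g → ℂ) :
    (∫ x : Fin g → ℝ, Complex.exp ((Real.pi : ℂ) * Complex.I *
      ((fun i => (x i : ℂ) + c i) ⬝ᵥ (Ω *ᵥ fun i => (x i : ℂ) + c i))))
      = ∫ x : Fin g → ℝ, Complex.exp ((Real.pi : ℂ) * Complex.I *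
      ((fun i => (x i : ℂ)) ⬝ᵥ (Ω *ᵥ fun i => (x i : ℂ)))) :=
  gaussian_integral_shift_general g Ω hpos c
end

section
/- Let Ω = N + iM be an invertible complex symmetric g×g matrix with M, N real, and let c ∈ ℂ^g with conj(c)ᵀMc < 0 (which forces cᵀMc ≠ 0). Then det(−i(Ω − (2i/(cᵀMc))·M c cᵀ M)) = det(−iΩ) · (cᵀ conj(Ω) Im(−Ω⁻¹) conj(Ω) c)/(cᵀMc). -/
/-!
With `M = Im Ω` and `B = Ω⁻¹`, the matrix determinant lemma gives
`det (Ω - s • (Mc)(Mc)ᵀ) = det Ω * (1 - s * (Mc)ᵀ B (Mc))`. On the other side,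
`conj Ω = Ω - 2i M` and `Im (-B) = B M (conj B)`, so
`(conj Ω) Im(-B) (conj Ω) = M - 2i M B M`; by symmetry of `M` the quadratic form
`cᵀ (conj Ω) Im(-B) (conj Ω) c` equals `cᵀMc - 2i (Mc)ᵀ B (Mc)`, and with `s = 2i / cᵀMc`
both sides agree.
-/

open Matrix Complex

namespace Matrix

variable {m n : Type*}

theorem map_conj_eq_sub_smul_map_im (A : Matrix m n ℂ) :
    A.map (starRingEnd ℂ) = A - (2 * I) • A.map fun z => (z.im : ℂ) := by
  ext i j
  have h := sub_conj (A i j)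
  push_cast at h
  simp only [map_apply, Matrix.sub_apply, Matrix.smul_apply, smul_eq_mul]
  linear_combination -h

variable [Fintype n]

theorem IsSymm.mulVec_dotProduct {R : Type*} [CommSemiring R] {S : Matrix n n R} (hS : S.IsSymm)
    (x y : n → R) : (S *ᵥ x) ⬝ᵥ y = x ⬝ᵥ (S *ᵥ y) := by
  rw [dotProduct_mulVec, ← mulVec_transpose, hS.eq]

variable [DecidableEq n]

theorem det_sub_smul_vecMulVec {R : Type*} [CommRing R] {A : Matrix n n R} (hA : IsUnit A.det)
    (s : R) (u v : n → R) :
    (A - s • vecMulVec u v).det = A.det * (1 - s * v ⬝ᵥ (A⁻¹ *ᵥ u)) := by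
  have hfactor : A - s • vecMulVec u v =
      A * (1 + replicateCol Unit (A⁻¹ *ᵥ (-s • u)) * replicateRow Unit v) := by
    rw [← vecMulVec_eq, mul_add, mul_one, mul_vecMulVec, mulVec_mulVec, mul_nonsing_inv A hA,
      one_mulVec, smul_vecMulVec, neg_smul, sub_eq_add_neg]
  rw [hfactor, det_mul, det_one_add_replicateCol_mul_replicateRow, mulVec_smul, dotProduct_smul,
    smul_eq_mul, neg_mul, ← sub_eq_add_neg]

theorem map_im_neg_inv {A : Matrix n n ℂ} (hA : IsUnit A.det) :
    (-A⁻¹).map (fun z => (z.im : ℂ)) =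
      A⁻¹ * A.map (fun z => (z.im : ℂ)) * A⁻¹.map (starRingEnd ℂ) := by
  have hconj : A.map (starRingEnd ℂ) * A⁻¹.map (starRingEnd ℂ) = 1 := by
    rw [← Matrix.map_mul, mul_nonsing_inv A hA, Matrix.map_one _ (map_zero _) (map_one _)]
  have hIm : (2 * I) • A.map (fun z => (z.im : ℂ)) = A - A.map (starRingEnd ℂ) := by
    rw [map_conj_eq_sub_smul_map_im, sub_sub_cancel]
  apply smul_right_injective _ (mul_ne_zero two_ne_zero I_ne_zero : (2 * I) ≠ 0)
  calc (2 * I) • (-A⁻¹).map (fun z => (z.im : ℂ))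
      = A⁻¹.map (starRingEnd ℂ) - A⁻¹ := by
        rw [map_conj_eq_sub_smul_map_im A⁻¹]
        ext i j
        simp
    _ = A⁻¹ * ((2 * I) • A.map (fun z => (z.im : ℂ))) * A⁻¹.map (starRingEnd ℂ) := by
        rw [hIm, mul_sub, sub_mul, nonsing_inv_mul A hA, one_mul, mul_assoc, hconj, mul_one]
    _ = (2 * I) • (A⁻¹ * A.map (fun z => (z.im : ℂ)) * A⁻¹.map (starRingEnd ℂ)) := by
        rw [Matrix.mul_smul, Matrix.smul_mul]

theorem map_conj_mul_map_im_neg_inv_mul_map_conj {A : Matrix n n ℂ} (hA : IsUnit A.det) :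
    A.map (starRingEnd ℂ) * (-A⁻¹).map (fun z => (z.im : ℂ)) * A.map (starRingEnd ℂ) =
      A.map (fun z => (z.im : ℂ)) -
        (2 * I) • (A.map (fun z => (z.im : ℂ)) * A⁻¹ * A.map (fun z => (z.im : ℂ))) := by
  have hconj : A⁻¹.map (starRingEnd ℂ) * A.map (starRingEnd ℂ) = 1 := by
    rw [← Matrix.map_mul, nonsing_inv_mul A hA, Matrix.map_one _ (map_zero _) (map_one _)]
  rw [map_im_neg_inv hA, mul_assoc, mul_assoc, hconj, mul_one, map_conj_eq_sub_smul_map_im,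
    sub_mul, mul_nonsing_inv_cancel_left _ _ hA, Matrix.smul_mul, mul_assoc]

theorem dotProduct_map_conj_mulVec_map_im_neg_inv_mulVec {A : Matrix n n ℂ} (hsym : A.IsSymm)
    (hA : IsUnit A.det) (c : n → ℂ) :
    c ⬝ᵥ (A.map (starRingEnd ℂ) *ᵥ ((-A⁻¹).map (fun z => (z.im : ℂ)) *ᵥ
        (A.map (starRingEnd ℂ) *ᵥ c))) =
      c ⬝ᵥ (A.map (fun z => (z.im : ℂ)) *ᵥ c) - 2 * I *
        ((A.map (fun z => (z.im : ℂ)) *ᵥ c) ⬝ᵥ (A⁻¹ *ᵥ (A.map (fun z => (z.im : ℂ)) *ᵥ c))) := by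
  rw [mulVec_mulVec, mulVec_mulVec, map_conj_mul_map_im_neg_inv_mul_map_conj hA, sub_mulVec,
    smul_mulVec, dotProduct_sub, dotProduct_smul, smul_eq_mul, (hsym.map _).mulVec_dotProduct,
    mulVec_mulVec, mulVec_mulVec, mul_assoc]

end Matrix

theorem det_rank_one_modification_general (g : ℕ) (Ω : Matrix (Fin g) (Fin g) ℂ)
    (hsym : Ω.IsSymm) (hdet : IsUnit Ω.det) (c : Fin g → ℂ)
    (hc0 : c ⬝ᵥ ((Ω.map fun z => (z.im : ℂ)) *ᵥ c) ≠ 0) :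
    ((-Complex.I) • (Ω - (2 * Complex.I / (c ⬝ᵥ ((Ω.map fun z => (z.im : ℂ)) *ᵥ c))) •
        vecMulVec ((Ω.map fun z => (z.im : ℂ)) *ᵥ c) ((Ω.map fun z => (z.im : ℂ)) *ᵥ c))).det
      = ((-Complex.I) • Ω).det *
        (c ⬝ᵥ ((Ω.map (starRingEnd ℂ)) *ᵥ (((-Ω⁻¹).map fun z => (z.im : ℂ)) *ᵥ
          ((Ω.map (starRingEnd ℂ)) *ᵥ c)))) /
        (c ⬝ᵥ ((Ω.map fun z => (z.im : ℂ)) *ᵥ c)) := by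
  rw [det_smul, det_smul, det_sub_smul_vecMulVec hdet,
    dotProduct_map_conj_mulVec_map_im_neg_inv_mulVec hsym hdet]
  field_simp

/-- Determinant identity for the rank-one modification Ω − (2i/(cᵀMc))·(Mc)(Mc)ᵀ,
where M = Im(Ω) and conj(c)ᵀMc is a negative real number. -/
theorem det_rank_one_modification (g : ℕ) (Ω : Matrix (Fin g) (Fin g) ℂ)
    (hsym : Ω.IsSymm) (hdet : IsUnit Ω.det) (c : Fin g → ℂ)
    (hneg : ∃ r : ℝ, r < 0 ∧
      (star c) ⬝ᵥ ((Ω.map fun z => (z.im : ℂ)) *ᵥ c) = (r : ℂ))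
    (hc0 : c ⬝ᵥ ((Ω.map fun z => (z.im : ℂ)) *ᵥ c) ≠ 0) :
    ((-Complex.I) • (Ω - (2 * Complex.I / (c ⬝ᵥ ((Ω.map fun z => (z.im : ℂ)) *ᵥ c))) •
        vecMulVec ((Ω.map fun z => (z.im : ℂ)) *ᵥ c) ((Ω.map fun z => (z.im : ℂ)) *ᵥ c))).det
      = ((-Complex.I) • Ω).det *
        (c ⬝ᵥ ((Ω.map (starRingEnd ℂ)) *ᵥ (((-Ω⁻¹).map fun z => (z.im : ℂ)) *ᵥ
          ((Ω.map (starRingEnd ℂ)) *ᵥ c)))) /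
        (c ⬝ᵥ ((Ω.map fun z => (z.im : ℂ)) *ᵥ c)) :=
  det_rank_one_modification_general g Ω hsym hdet c hc0
end

section
/- Let M be a real symmetric g×g matrix of signature (g−1,1) (i.e., g−1 positive eigenvalues and 1 negative eigenvalue), and let c ∈ ℂ^g with conj(c)ᵀMc < 0. Then cᵀMc ≠ 0, and the real symmetric matrix A := M + M·Re((−(1/2)·cᵀMc)⁻¹ · c cᵀ)·M is positive definite. -/
/-
Write `a`, `b` for the real and imaginary parts of `c`, so that `aᵀMa + bᵀMb = conj(c)ᵀMc < 0`.
Since `M` is positive definite on the orthogonal complement of its `i₀`-th eigenvector, the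
`M`-orthogonal complement of an `M`-negative vector is `M`-positive; as `cᵀMc = 0` would make
`a`, `b` `M`-orthogonal with `aᵀMa = bᵀMb < 0`, this gives `cᵀMc ≠ 0`.

Replacing `c` by `w • c` (`w ≠ 0`) does not change `A`, so choosing `w² = |cᵀMc| / cᵀMc` we may
assume `cᵀMc = t > 0`, i.e. `aᵀMb = 0` and `aᵀMa - bᵀMb = t`. Then
`t · xᵀAx = t · xᵀMx - 2 ((xᵀMa)² - (xᵀMb)²)`; writing `x = y + β b` with `yᵀMb = 0` and using
the Cauchy–Schwarz inequality `(yᵀMa)² ≤ (yᵀMy)(aᵀMa)` on the `M`-positive space `b^⊥`, this is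
at least `-(aᵀMa + bᵀMb) (yᵀMy - β² bᵀMb) > 0`.
-/

open Matrix

namespace Matrix

variable {n : Type*} [Fintype n]

section Complexification

variable (M : Matrix n n ℝ)

theorem re_dotProduct_map_ofReal_mulVec (u v : n → ℂ) :
    (u ⬝ᵥ M.map (↑) *ᵥ v).re =
      (Complex.re ∘ u) ⬝ᵥ M *ᵥ (Complex.re ∘ v) - (Complex.im ∘ u) ⬝ᵥ M *ᵥ (Complex.im ∘ v) := by
  simp only [dotProduct, mulVec, Matrix.map_apply, Finset.mul_sum, Complex.re_sum,
    Complex.mul_re, Complex.mul_im, Complex.ofReal_re, Complex.ofReal_im, Function.comp_apply,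
    ← Finset.sum_sub_distrib]
  exact Finset.sum_congr rfl fun i _ ↦ Finset.sum_congr rfl fun j _ ↦ by ring

theorem im_dotProduct_map_ofReal_mulVec (u v : n → ℂ) :
    (u ⬝ᵥ M.map (↑) *ᵥ v).im =
      (Complex.re ∘ u) ⬝ᵥ M *ᵥ (Complex.im ∘ v) + (Complex.im ∘ u) ⬝ᵥ M *ᵥ (Complex.re ∘ v) := by
  simp only [dotProduct, mulVec, Matrix.map_apply, Finset.mul_sum, Complex.im_sum,
    Complex.mul_re, Complex.mul_im, Complex.ofReal_re, Complex.ofReal_im, Function.comp_apply,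
    ← Finset.sum_add_distrib]
  exact Finset.sum_congr rfl fun i _ ↦ Finset.sum_congr rfl fun j _ ↦ by ring

theorem re_ofReal_comp_dotProduct (p : n → ℝ) (c : n → ℂ) :
    ((Complex.ofReal ∘ p) ⬝ᵥ c).re = p ⬝ᵥ (Complex.re ∘ c) := by
  simp [dotProduct, Complex.re_sum]

theorem im_ofReal_comp_dotProduct (p : n → ℝ) (c : n → ℂ) :
    ((Complex.ofReal ∘ p) ⬝ᵥ c).im = p ⬝ᵥ (Complex.im ∘ c) := by
  simp [dotProduct, Complex.im_sum]

theorem dotProduct_map_re_smul_vecMulVec_mulVec (z : ℂ) (c : n → ℂ) (p : n → ℝ) :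
    p ⬝ᵥ (z • vecMulVec c c).map Complex.re *ᵥ p = (z * ((Complex.ofReal ∘ p) ⬝ᵥ c) ^ 2).re := by
  simp only [sq, dotProduct, mulVec, Finset.sum_mul, Finset.mul_sum, Complex.re_sum,
    Matrix.map_apply, Matrix.smul_apply, vecMulVec_apply, smul_eq_mul, Function.comp_apply]
  refine Finset.sum_congr rfl fun i _ ↦ Finset.sum_congr rfl fun j _ ↦ ?_
  simp only [Complex.mul_re, Complex.mul_im, Complex.ofReal_re, Complex.ofReal_im]
  ring

theorem re_star_dotProduct_map_ofReal_mulVec_self (c : n → ℂ) :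
    (star c ⬝ᵥ M.map (↑) *ᵥ c).re =
      (Complex.re ∘ c) ⬝ᵥ M *ᵥ (Complex.re ∘ c) + (Complex.im ∘ c) ⬝ᵥ M *ᵥ (Complex.im ∘ c) := by
  have hre : Complex.re ∘ star c = Complex.re ∘ c := funext fun i ↦ by simp
  have him : Complex.im ∘ star c = -(Complex.im ∘ c) := funext fun i ↦ by simp
  rw [re_dotProduct_map_ofReal_mulVec, hre, him, neg_dotProduct, sub_neg_eq_add]

theorem smul_dotProduct_mulVec_smul (A : Matrix n n ℂ) (w : ℂ) (c : n → ℂ) :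
    (w • c) ⬝ᵥ A *ᵥ (w • c) = w ^ 2 * (c ⬝ᵥ A *ᵥ c) := by
  rw [smul_dotProduct, mulVec_smul, dotProduct_smul, smul_eq_mul, smul_eq_mul, sq, mul_assoc]

theorem star_smul_dotProduct_mulVec_smul (A : Matrix n n ℂ) (w : ℂ) (c : n → ℂ) :
    star (w • c) ⬝ᵥ A *ᵥ (w • c) = Complex.normSq w * (star c ⬝ᵥ A *ᵥ c) := by
  rw [star_smul, smul_dotProduct, mulVec_smul, dotProduct_smul, smul_eq_mul, smul_eq_mul,
    ← mul_assoc, Complex.star_def, mul_comm _ w, Complex.mul_conj]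

noncomputable def modification (c : n → ℂ) : Matrix n n ℝ :=
  M + M * (((-(1 / 2 : ℂ) * (c ⬝ᵥ M.map (↑) *ᵥ c))⁻¹ • vecMulVec c c).map Complex.re) * M

theorem modification_smul (c : n → ℂ) {w : ℂ} (hw : w ≠ 0) :
    modification M (w • c) = modification M c := by
  have hscalar : (-(1 / 2 : ℂ) * ((w • c) ⬝ᵥ M.map (↑) *ᵥ (w • c)))⁻¹ • vecMulVec (w • c) (w • c) =
      (-(1 / 2 : ℂ) * (c ⬝ᵥ M.map (↑) *ᵥ c))⁻¹ • vecMulVec c c := by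
    rw [smul_vecMulVec, vecMulVec_smul, smul_smul, smul_smul, smul_dotProduct_mulVec_smul]
    congr 1
    rw [mul_left_comm, mul_inv]
    field_simp
  simp only [modification, hscalar]

end Complexification

variable {M : Matrix n n ℝ}

theorem IsSymm.dotProduct_mulVec_comm (hM : M.IsSymm) (x y : n → ℝ) :
    x ⬝ᵥ M *ᵥ y = y ⬝ᵥ M *ᵥ x := by
  rw [dotProduct_mulVec, ← mulVec_transpose, hM.eq, dotProduct_comm]

theorem IsSymm.dotProduct_mulVec_smul_add_smul (hM : M.IsSymm) (s t : ℝ) (u v : n → ℝ) :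
    (s • u + t • v) ⬝ᵥ M *ᵥ (s • u + t • v) =
      s ^ 2 * (u ⬝ᵥ M *ᵥ u) + 2 * s * t * (u ⬝ᵥ M *ᵥ v) + t ^ 2 * (v ⬝ᵥ M *ᵥ v) := by
  simp only [mulVec_add, mulVec_smul, dotProduct_add, add_dotProduct, dotProduct_smul,
    smul_dotProduct, smul_eq_mul, hM.dotProduct_mulVec_comm v u]
  ring

theorem IsSymm.pos_of_dotProduct_mulVec_eq_zero (hM : M.IsSymm) {ℓ : n → ℝ}
    (hℓ : ∀ z, ℓ ⬝ᵥ z = 0 → z ≠ 0 → 0 < z ⬝ᵥ M *ᵥ z) {u v : n → ℝ}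
    (hu : u ⬝ᵥ M *ᵥ u < 0) (huv : u ⬝ᵥ M *ᵥ v = 0) (hv : v ≠ 0) : 0 < v ⬝ᵥ M *ᵥ v := by
  by_contra! hqv
  set α := ℓ ⬝ᵥ u
  set β := ℓ ⬝ᵥ v
  have hα : α ≠ 0 := fun h ↦ (hℓ u h (by rintro rfl; simp at hu)).not_gt hu
  -- `α • v - β • u` lies in the hyperplane `ℓ = 0` but has nonpositive norm.
  have hz : α • v + (-β) • u = 0 := by
    by_contra hz
    have hpos := hℓ _ (by simp only [dotProduct_add, dotProduct_smul, smul_eq_mul]; ring) hz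
    rw [hM.dotProduct_mulVec_smul_add_smul, hM.dotProduct_mulVec_comm v u, huv] at hpos
    nlinarith [sq_nonneg α, sq_nonneg β]
  have hβ : β = 0 := by
    have := congrArg (u ⬝ᵥ M *ᵥ ·) hz
    simp only [mulVec_add, mulVec_smul, dotProduct_add, dotProduct_smul, huv, smul_eq_mul,
      mulVec_zero, dotProduct_zero] at this
    nlinarith
  rw [hβ, neg_zero, zero_smul, add_zero, smul_eq_zero] at hz
  exact hz.elim hα hv

theorem IsSymm.sq_dotProduct_mulVec_le (hM : M.IsSymm) {y a : n → ℝ}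
    (h : ∀ s : ℝ, 0 ≤ (y + s • a) ⬝ᵥ M *ᵥ (y + s • a)) :
    (y ⬝ᵥ M *ᵥ a) ^ 2 ≤ (y ⬝ᵥ M *ᵥ y) * (a ⬝ᵥ M *ᵥ a) := by
  have hd : discrim (a ⬝ᵥ M *ᵥ a) (2 * (y ⬝ᵥ M *ᵥ a)) (y ⬝ᵥ M *ᵥ y) ≤ 0 :=
    discrim_le_zero fun s ↦ by
      have := h s
      rw [← one_smul ℝ y, hM.dotProduct_mulVec_smul_add_smul] at this
      linarith
  rw [discrim] at hd
  linarith

theorem IsSymm.two_mul_sq_sub_sq_lt (hM : M.IsSymm) {a b : n → ℝ}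
    (hb : ∀ v, b ⬝ᵥ M *ᵥ v = 0 → v ≠ 0 → 0 < v ⬝ᵥ M *ᵥ v)
    (hab : a ⬝ᵥ M *ᵥ b = 0) (hqb : b ⬝ᵥ M *ᵥ b < 0) (hsum : a ⬝ᵥ M *ᵥ a + b ⬝ᵥ M *ᵥ b < 0)
    {x : n → ℝ} (hx : x ≠ 0) :
    2 * ((x ⬝ᵥ M *ᵥ a) ^ 2 - (x ⬝ᵥ M *ᵥ b) ^ 2) <
      (a ⬝ᵥ M *ᵥ a - b ⬝ᵥ M *ᵥ b) * (x ⬝ᵥ M *ᵥ x) := by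
  set qa := a ⬝ᵥ M *ᵥ a
  set qb := b ⬝ᵥ M *ᵥ b
  have hb' : ∀ v, b ⬝ᵥ M *ᵥ v = 0 → 0 ≤ v ⬝ᵥ M *ᵥ v := fun v hv ↦ by
    rcases eq_or_ne v 0 with rfl | hv0
    · simp
    · exact (hb v hv hv0).le
  set β := (x ⬝ᵥ M *ᵥ b) / qb
  set y := x + (-β) • b
  have hxy : x = (1 : ℝ) • y + β • b := by simp [y]
  have hby : b ⬝ᵥ M *ᵥ y = 0 := by
    rw [mulVec_add, dotProduct_add, mulVec_smul, dotProduct_smul, smul_eq_mul,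
      hM.dotProduct_mulVec_comm b x, neg_mul, div_mul_cancel₀ _ hqb.ne, add_neg_cancel]
  have hqx : x ⬝ᵥ M *ᵥ x = y ⬝ᵥ M *ᵥ y + β ^ 2 * qb := by
    rw [hxy, hM.dotProduct_mulVec_smul_add_smul, hM.dotProduct_mulVec_comm y b, hby]
    ring
  have hxa : x ⬝ᵥ M *ᵥ a = y ⬝ᵥ M *ᵥ a := by
    rw [hxy, add_dotProduct, smul_dotProduct, smul_dotProduct, hM.dotProduct_mulVec_comm b a,
      hab]
    simp
  have hxb : x ⬝ᵥ M *ᵥ b = β * qb := by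
    rw [div_mul_cancel₀ _ hqb.ne]
  have hCS : (y ⬝ᵥ M *ᵥ a) ^ 2 ≤ (y ⬝ᵥ M *ᵥ y) * qa := hM.sq_dotProduct_mulVec_le fun s ↦ by
    refine hb' _ ?_
    rw [mulVec_add, dotProduct_add, mulVec_smul, dotProduct_smul, hby,
      hM.dotProduct_mulVec_comm b a, hab, smul_zero, add_zero]
  rw [hqx, hxa, hxb]
  rcases eq_or_ne y 0 with hy0 | hy0
  · have hβ : β ≠ 0 := by
      rintro hβ
      simp [hβ, hy0] at hxy
      exact hx hxy
    simp only [hy0, zero_dotProduct] at hCS ⊢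
    have := mul_pos (by positivity : 0 < β ^ 2) (mul_pos_of_neg_of_neg hqb hsum)
    nlinarith
  · have := mul_pos (hb y hby hy0) (neg_pos.mpr hsum)
    nlinarith [mul_nonneg (sq_nonneg β) (mul_pos_of_neg_of_neg hqb hsum).le]

namespace IsHermitian

variable [DecidableEq n] (hM : M.IsHermitian)

theorem star_eigenvectorUnitary_mulVec_apply (x : n → ℝ) (i : n) :
    (star (hM.eigenvectorUnitary : Matrix n n ℝ) *ᵥ x) i = ⇑(hM.eigenvectorBasis i) ⬝ᵥ x := by
  simp [mulVec, dotProduct]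

theorem dotProduct_mulVec_eq_sum_eigenvalues (x : n → ℝ) :
    x ⬝ᵥ M *ᵥ x = ∑ i, hM.eigenvalues i * (⇑(hM.eigenvectorBasis i) ⬝ᵥ x) ^ 2 := by
  simp_rw [← hM.star_eigenvectorUnitary_mulVec_apply]
  conv_lhs => rw [hM.spectral_theorem, Unitary.conjStarAlgAut_apply]
  rw [← mulVec_mulVec, ← mulVec_mulVec, dotProduct_mulVec, ← mulVec_transpose,
    ← conjTranspose_eq_transpose_of_trivial, ← star_eq_conjTranspose]
  simp only [dotProduct, mulVec_diagonal, Function.comp_apply, RCLike.ofReal_real_eq_id, id_eq]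
  exact Finset.sum_congr rfl fun i _ ↦ by ring

theorem dotProduct_mulVec_pos_of_dotProduct_eigenvectorBasis_eq_zero {i₀ : n}
    (hpos : ∀ i, i ≠ i₀ → 0 < hM.eigenvalues i) {z : n → ℝ}
    (hz : ⇑(hM.eigenvectorBasis i₀) ⬝ᵥ z = 0) (hz0 : z ≠ 0) : 0 < z ⬝ᵥ M *ᵥ z := by
  obtain ⟨i, hi⟩ : ∃ i, ⇑(hM.eigenvectorBasis i) ⬝ᵥ z ≠ 0 := by
    by_contra! h
    refine hz0 ?_
    have hUz : star (hM.eigenvectorUnitary : Matrix n n ℝ) *ᵥ z = 0 := funext fun i ↦ by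
      rw [hM.star_eigenvectorUnitary_mulVec_apply, h i, Pi.zero_apply]
    rw [← one_mulVec z, ← mem_unitaryGroup_iff.mp hM.eigenvectorUnitary.2, ← mulVec_mulVec, hUz,
      mulVec_zero]
  have hterm : ∀ j, 0 ≤ hM.eigenvalues j * (⇑(hM.eigenvectorBasis j) ⬝ᵥ z) ^ 2 := fun j ↦ by
    rcases eq_or_ne j i₀ with rfl | hj
    · simp [hz]
    · exact mul_nonneg (hpos j hj).le (sq_nonneg _)
  rw [hM.dotProduct_mulVec_eq_sum_eigenvalues]
  refine Finset.sum_pos' (fun j _ ↦ hterm j) ⟨i, Finset.mem_univ i, ?_⟩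
  have hii₀ : i ≠ i₀ := by rintro rfl; exact hi hz
  exact mul_pos (hpos i hii₀) (by positivity)

end IsHermitian

theorem IsSymm.im_dotProduct_map_ofReal_mulVec_self (hM : M.IsSymm) (c : n → ℂ) :
    (c ⬝ᵥ M.map (↑) *ᵥ c).im = 2 * ((Complex.re ∘ c) ⬝ᵥ M *ᵥ (Complex.im ∘ c)) := by
  rw [im_dotProduct_map_ofReal_mulVec, hM.dotProduct_mulVec_comm (Complex.im ∘ c)]
  ring

theorem IsSymm.dotProduct_map_ofReal_mulVec_self_ne_zero (hM : M.IsSymm) {ℓ : n → ℝ}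
    (hℓ : ∀ z, ℓ ⬝ᵥ z = 0 → z ≠ 0 → 0 < z ⬝ᵥ M *ᵥ z) {c : n → ℂ}
    (hc : (star c ⬝ᵥ M.map (↑) *ᵥ c).re < 0) : c ⬝ᵥ M.map (↑) *ᵥ c ≠ 0 := by
  intro hT
  have hre := re_dotProduct_map_ofReal_mulVec M c c
  have him := hM.im_dotProduct_map_ofReal_mulVec_self c
  rw [re_star_dotProduct_map_ofReal_mulVec_self] at hc
  rw [hT, Complex.zero_re] at hre
  rw [hT, Complex.zero_im, zero_eq_mul, or_iff_right two_ne_zero] at him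
  have hb : Complex.im ∘ c ≠ 0 := by
    intro hb
    simp only [hb, zero_dotProduct] at hre hc
    linarith
  exact (hM.pos_of_dotProduct_mulVec_eq_zero hℓ (by linarith) him hb).not_gt (by linarith)

theorem IsHermitian.posDef_modification_of_eq_ofReal (hM : M.IsHermitian) {ℓ : n → ℝ}
    (hℓ : ∀ z, ℓ ⬝ᵥ z = 0 → z ≠ 0 → 0 < z ⬝ᵥ M *ᵥ z) {c : n → ℂ}
    (hc : (star c ⬝ᵥ M.map (↑) *ᵥ c).re < 0) {t : ℝ} (ht : 0 < t)
    (hT : c ⬝ᵥ M.map (↑) *ᵥ c = t) : (modification M c).PosDef := by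
  have hMs : M.IsSymm := isHermitian_iff_isSymm.mp hM
  set a := Complex.re ∘ c
  set b := Complex.im ∘ c
  have hsum : a ⬝ᵥ M *ᵥ a + b ⬝ᵥ M *ᵥ b < 0 := by
    rwa [re_star_dotProduct_map_ofReal_mulVec_self] at hc
  have hdiff : a ⬝ᵥ M *ᵥ a - b ⬝ᵥ M *ᵥ b = t := by
    rw [← re_dotProduct_map_ofReal_mulVec, hT, Complex.ofReal_re]
  have hab : a ⬝ᵥ M *ᵥ b = 0 := by
    have := hMs.im_dotProduct_map_ofReal_mulVec_self c
    rw [hT, Complex.ofReal_im] at this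
    linarith
  have hqb : b ⬝ᵥ M *ᵥ b < 0 := by linarith
  have hb : ∀ v, b ⬝ᵥ M *ᵥ v = 0 → v ≠ 0 → 0 < v ⬝ᵥ M *ᵥ v := fun _ ↦
    hMs.pos_of_dotProduct_mulVec_eq_zero hℓ hqb
  set N := ((-(1 / 2 : ℂ) * (c ⬝ᵥ M.map (↑) *ᵥ c))⁻¹ • vecMulVec c c).map Complex.re
  have hN : N.IsSymm := (IsSymm.smul (transpose_vecMulVec c c) _).map _
  have hA : (modification M c).IsSymm := hMs.add <| by
    rw [IsSymm, transpose_mul, transpose_mul, hMs.eq, hN.eq, mul_assoc]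
  refine .of_dotProduct_mulVec_pos (isHermitian_iff_isSymm.mpr hA) fun x hx ↦ ?_
  have hquad : x ⬝ᵥ modification M c *ᵥ x = x ⬝ᵥ M *ᵥ x + (M *ᵥ x) ⬝ᵥ N *ᵥ (M *ᵥ x) := by
    rw [modification, add_mulVec, dotProduct_add, ← mulVec_mulVec, ← mulVec_mulVec]
    congr 1
    rw [dotProduct_mulVec, ← mulVec_transpose, hMs.eq]
  have hNquad : (M *ᵥ x) ⬝ᵥ N *ᵥ (M *ᵥ x) =
      -(2 / t) * ((x ⬝ᵥ M *ᵥ a) ^ 2 - (x ⬝ᵥ M *ᵥ b) ^ 2) := by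
    have hz : (-(1 / 2 : ℂ) * t)⁻¹ = ((-(2 / t) : ℝ) : ℂ) := by push_cast; field_simp
    rw [dotProduct_map_re_smul_vecMulVec_mulVec, hT, hz, Complex.re_ofReal_mul, sq,
      Complex.mul_re, re_ofReal_comp_dotProduct, im_ofReal_comp_dotProduct,
      dotProduct_comm, hMs.dotProduct_mulVec_comm a, dotProduct_comm _ b,
      hMs.dotProduct_mulVec_comm b]
    ring
  have key := hMs.two_mul_sq_sub_sq_lt hb hab hqb hsum hx
  rw [hdiff] at key
  rw [star_trivial, hquad, hNquad]
  calc 0 < (t * (x ⬝ᵥ M *ᵥ x) - 2 * ((x ⬝ᵥ M *ᵥ a) ^ 2 - (x ⬝ᵥ M *ᵥ b) ^ 2)) / t :=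
        div_pos (by linarith) ht
    _ = _ := by field_simp; ring

end Matrix

theorem pos_def_modification_general (g : ℕ) (M : Matrix (Fin g) (Fin g) ℝ)
    (hM : M.IsHermitian) (i₀ : Fin g)
    (hpos : ∀ i, i ≠ i₀ → 0 < hM.eigenvalues i)
    (c : Fin g → ℂ)
    (hc : ∃ r : ℝ, r < 0 ∧
      (star c) ⬝ᵥ ((M.map fun x => (x : ℂ)) *ᵥ c) = (r : ℂ)) :
    c ⬝ᵥ ((M.map fun x => (x : ℂ)) *ᵥ c) ≠ 0 ∧
    (M + M * ((((-(1/2 : ℂ) * (c ⬝ᵥ ((M.map fun x => (x : ℂ)) *ᵥ c)))⁻¹ •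
        vecMulVec c c).map Complex.re)) * M).PosDef := by
  obtain ⟨r, hr, hstar⟩ := hc
  have hℓ : ∀ z, ⇑(hM.eigenvectorBasis i₀) ⬝ᵥ z = 0 → z ≠ 0 → 0 < z ⬝ᵥ M *ᵥ z := fun _ ↦
    hM.dotProduct_mulVec_pos_of_dotProduct_eigenvectorBasis_eq_zero hpos
  have hc : (star c ⬝ᵥ M.map (↑) *ᵥ c).re < 0 := by rwa [hstar, Complex.ofReal_re]
  set T := c ⬝ᵥ M.map (↑) *ᵥ c
  have hT : T ≠ 0 := (isHermitian_iff_isSymm.mp hM).dotProduct_map_ofReal_mulVec_self_ne_zero hℓ hc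
  refine ⟨hT, ?_⟩
  obtain ⟨w, hw⟩ := IsAlgClosed.exists_pow_nat_eq ((‖T‖ : ℂ) / T) two_pos
  have hw0 : w ≠ 0 := by
    rintro rfl
    exact div_ne_zero (Complex.ofReal_ne_zero.mpr (norm_ne_zero_iff.mpr hT)) hT
      (by simpa using hw.symm)
  change (modification M c).PosDef
  rw [← modification_smul M c hw0]
  refine hM.posDef_modification_of_eq_ofReal hℓ ?_ (norm_pos_iff.mpr hT) ?_
  · rw [star_smul_dotProduct_mulVec_smul, Complex.re_ofReal_mul]
    exact mul_neg_of_pos_of_neg (Complex.normSq_pos.mpr hw0) hc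
  · rw [smul_dotProduct_mulVec_smul, hw, div_mul_cancel₀ _ hT]

/-- For M real symmetric of signature (g−1,1) and c ∈ ℂ^g with conj(c)ᵀMc < 0,
one has cᵀMc ≠ 0 and M + M·Re((−(1/2)cᵀMc)⁻¹ c cᵀ)·M is positive definite. -/
theorem pos_def_modification (g : ℕ) (M : Matrix (Fin g) (Fin g) ℝ)
    (hM : M.IsHermitian) (i₀ : Fin g)
    (hneg : hM.eigenvalues i₀ < 0)
    (hpos : ∀ i, i ≠ i₀ → 0 < hM.eigenvalues i)
    (c : Fin g → ℂ)
    (hc : ∃ r : ℝ, r < 0 ∧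
      (star c) ⬝ᵥ ((M.map fun x => (x : ℂ)) *ᵥ c) = (r : ℂ)) :
    c ⬝ᵥ ((M.map fun x => (x : ℂ)) *ᵥ c) ≠ 0 ∧
    (M + M * ((((-(1/2 : ℂ) * (c ⬝ᵥ ((M.map fun x => (x : ℂ)) *ᵥ c)))⁻¹ •
        vecMulVec c c).map Complex.re)) * M).PosDef :=
  pos_def_modification_general g M hM i₀ hpos c hc
end

section
/- Let λ, μ > 0 be real and Re(s) > 0. Then ∫₀^∞ E(√(λt)) e^{−μt} t^{s−1} dt = (1/2) π^{−1/2} μ^{−s} Γ(s + 1/2) · B̃(πλ/μ; 1/2, 1/2 − s), where E(α) = ∫₀^α e^{−πu²} du and B̃(x;a,b) = ∫₀ˣ t^{a−1}(1+t)^{b−1} dt. -/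
/-!
Write `E(√(λt)) = √(λt) ∫₀¹ e^{-πλt v²} dv` and exchange the order of integration. The
`t`-integral is then a Gamma integral, which leaves `√λ Γ(s + 1/2) ∫₀¹ (μ + πλv²)^{-(s+1/2)} dv`;
the substitution `x = (πλ/μ) v²` turns this into the incomplete beta integral.
-/

open MeasureTheory Set Complex

lemma ofReal_sqrt_eq_cpow {t : ℝ} (ht : 0 ≤ t) : ((√t : ℝ) : ℂ) = (t : ℂ) ^ (1 / 2 : ℂ) := by
  rw [Real.sqrt_eq_rpow, ofReal_cpow ht]
  norm_num

lemma integral_sqrt_mul_exp_neg_mul_cpow {s : ℂ} (hs : -1 / 2 < s.re) {r : ℝ} (hr : 0 < r) :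
    ∫ t in Ioi (0 : ℝ), (√t : ℂ) * (Real.exp (-(r * t)) : ℂ) * (t : ℂ) ^ (s - 1)
      = (r : ℂ) ^ (-(s + 1 / 2)) * Gamma (s + 1 / 2) := by
  have hre : 0 < (s + 1 / 2).re := by norm_num; linarith
  have hr' : (r : ℂ).arg ≠ Real.pi := by
    rw [arg_ofReal_of_nonneg hr.le]; exact Real.pi_ne_zero.symm
  have hΓ := integral_cpow_mul_exp_neg_mul_Ioi hre hr
  rw [one_div (r : ℂ), inv_cpow _ _ hr', ← cpow_neg] at hΓ
  rw [← hΓ]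
  refine setIntegral_congr_fun measurableSet_Ioi fun t (ht : 0 < t) => ?_
  rw [ofReal_sqrt_eq_cpow ht.le, ofReal_exp, ofReal_neg, ofReal_mul, mul_right_comm,
    ← cpow_add _ _ (ofReal_ne_zero.2 ht.ne')]
  ring_nf

lemma integrable_sqrt_mul_exp_neg_mul_cpow_prod {α : Type*} [MeasurableSpace α] {ν : Measure α}
    [IsFiniteMeasure ν] {r : α → ℝ} (hr : Measurable r) {m : ℝ} (hm : 0 < m) (hrm : ∀ v, m ≤ r v)
    {s : ℂ} (hs : -1 / 2 < s.re) :
    Integrable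
      (fun p : ℝ × α => (√p.1 : ℂ) * (Real.exp (-(r p.2 * p.1)) : ℂ) * (p.1 : ℂ) ^ (s - 1))
      ((volume.restrict (Ioi 0)).prod ν) := by
  have hbound : IntegrableOn (fun t : ℝ => t ^ (s.re - 1 / 2) * Real.exp (-m * t)) (Ioi 0) := by
    simpa using integrableOn_rpow_mul_exp_neg_mul_rpow (p := 1) (by linarith) zero_lt_one hm
  refine (hbound.mul_prod (integrable_const (1 : ℝ))).mono' (by fun_prop) ?_
  filter_upwards [Measure.quasiMeasurePreserving_fst.ae (ae_restrict_mem measurableSet_Ioi)]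
    with ⟨t, v⟩ (ht : 0 < t)
  have hexp : Real.exp (-(r v * t)) ≤ Real.exp (-m * t) :=
    Real.exp_le_exp.2 (by nlinarith [hrm v])
  have hpow : √t * t ^ (s.re - 1) = t ^ (s.re - 1 / 2) := by
    rw [Real.sqrt_eq_rpow, ← Real.rpow_add ht]; ring_nf
  simp only [norm_mul, norm_real, norm_cpow_eq_rpow_re_of_pos ht, sub_re, one_re,
    Real.norm_of_nonneg (Real.sqrt_nonneg _), Real.norm_of_nonneg (Real.exp_pos _).le, mul_one]
  calc √t * Real.exp (-(r v * t)) * t ^ (s.re - 1)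
      ≤ √t * Real.exp (-m * t) * t ^ (s.re - 1) := by gcongr
    _ = _ := by rw [← hpow]; ring

lemma integral_integral_sqrt_mul_exp_neg_mul_cpow {α : Type*} [MeasurableSpace α] {ν : Measure α}
    [IsFiniteMeasure ν] {r : α → ℝ} (hr : Measurable r) {m : ℝ} (hm : 0 < m) (hrm : ∀ v, m ≤ r v)
    {s : ℂ} (hs : -1 / 2 < s.re) :
    ∫ t in Ioi (0 : ℝ), ∫ v, (√t : ℂ) * (Real.exp (-(r v * t)) : ℂ) * (t : ℂ) ^ (s - 1) ∂ν
      = Gamma (s + 1 / 2) * ∫ v, (r v : ℂ) ^ (-(s + 1 / 2)) ∂ν := by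
  rw [integral_integral_swap (integrable_sqrt_mul_exp_neg_mul_cpow_prod hr hm hrm hs),
    ← integral_const_mul]
  refine integral_congr_ae (ae_of_all _ fun v => ?_)
  dsimp only
  rw [integral_sqrt_mul_exp_neg_mul_cpow hs (hm.trans_le (hrm v)), mul_comm]

lemma integral_Ioo_eq_integral_Ioo_mul_sq {E : Type*} [NormedAddCommGroup E] [NormedSpace ℝ E]
    {c : ℝ} (hc : 0 < c) (g : ℝ → E) :
    ∫ t in Ioo 0 c, g t = ∫ v in Ioo 0 1, (2 * c * v) • g (c * v ^ 2) := by
  have himage : (fun v : ℝ => c * v ^ 2) '' Ioo 0 1 = Ioo 0 c := by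
    ext t
    simp only [mem_image, mem_Ioo]
    constructor
    · rintro ⟨v, ⟨hv0, hv1⟩, rfl⟩
      have hv2 : v ^ 2 < 1 := pow_lt_one₀ hv0.le hv1 two_ne_zero
      exact ⟨by positivity, by nlinarith⟩
    · rintro ⟨ht0, htc⟩
      refine ⟨√(t / c), ⟨by positivity, ?_⟩, ?_⟩
      · rw [Real.sqrt_lt' one_pos, one_pow]; exact (div_lt_one hc).2 htc
      · rw [Real.sq_sqrt (by positivity), mul_div_cancel₀ _ hc.ne']
  have hderiv : ∀ v ∈ Ioo (0 : ℝ) 1,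
      HasDerivWithinAt (fun v : ℝ => c * v ^ 2) (2 * c * v) (Ioo 0 1) v := fun v _ =>
    ((hasDerivAt_pow 2 v).const_mul c).hasDerivWithinAt.congr_deriv (by push_cast; ring)
  have hmono : StrictMonoOn (fun v : ℝ => c * v ^ 2) (Ioo 0 1) := fun a ha b _ hab =>
    mul_lt_mul_of_pos_left (pow_lt_pow_left₀ hab ha.1.le two_ne_zero) hc
  rw [← himage, integral_image_eq_integral_abs_deriv_smul measurableSet_Ioo hderiv hmono.injOn g]
  refine setIntegral_congr_fun measurableSet_Ioo fun v hv => ?_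
  rw [abs_of_pos (by have := hv.1; positivity)]

lemma integral_cpow_neg_half_mul_one_add_cpow {c : ℝ} (hc : 0 < c) (w : ℂ) :
    ∫ t in (0 : ℝ)..c, (t : ℂ) ^ ((1 / 2 : ℂ) - 1) * ((1 : ℂ) + t) ^ w
      = 2 * (√c : ℂ) * ∫ v in Ioc (0 : ℝ) 1, ((1 + c * v ^ 2 : ℝ) : ℂ) ^ w := by
  rw [intervalIntegral.integral_of_le hc.le, integral_Ioc_eq_integral_Ioo,
    integral_Ioo_eq_integral_Ioo_mul_sq hc, integral_Ioc_eq_integral_Ioo, ← integral_const_mul]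
  refine setIntegral_congr_fun measurableSet_Ioo fun v ⟨hv, _⟩ => ?_
  have hcv : 0 < c * v ^ 2 := by positivity
  have hsqrt : √(c * v ^ 2) = √c * v := by rw [Real.sqrt_mul hc.le, Real.sqrt_sq hv.le]
  have hc' : (c : ℂ) ≠ 0 := ofReal_ne_zero.2 hc.ne'
  have hv' : (v : ℂ) ≠ 0 := ofReal_ne_zero.2 hv.ne'
  rw [cpow_sub _ _ (ofReal_ne_zero.2 hcv.ne'), cpow_one, ← ofReal_sqrt_eq_cpow hcv.le, hsqrt,
    real_smul]
  push_cast
  field_simp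

lemma ofReal_integral_exp_neg_pi_mul_sq_mul_exp_mul_cpow {lam mu t : ℝ} (hlam : 0 ≤ lam)
    (hmu : 0 < mu) (ht : 0 ≤ t) (s : ℂ) :
    (((∫ u in (0 : ℝ)..√(lam * t), Real.exp (-Real.pi * u ^ 2)) : ℝ) : ℂ)
        * Real.exp (-mu * t) * (t : ℂ) ^ (s - 1)
      = √lam * ∫ v in Ioc (0 : ℝ) 1, (√t : ℂ)
          * (Real.exp (-(mu * (1 + Real.pi * lam / mu * v ^ 2) * t)) : ℂ) * (t : ℂ) ^ (s - 1) := by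
  have hscale : ∫ u in (0 : ℝ)..√(lam * t), Real.exp (-Real.pi * u ^ 2)
      = ∫ v in Ioc (0 : ℝ) 1, √(lam * t) * Real.exp (-Real.pi * (√(lam * t) * v) ^ 2) := by
    rw [← intervalIntegral.integral_of_le zero_le_one, intervalIntegral.integral_const_mul,
      ← smul_eq_mul (√(lam * t)),
      intervalIntegral.smul_integral_comp_mul_left (fun u => Real.exp (-Real.pi * u ^ 2)),
      mul_zero, mul_one]
  rw [hscale, ← integral_complex_ofReal, ← integral_mul_const, ← integral_mul_const,
    ← integral_const_mul]
  refine integral_congr_ae (ae_of_all _ fun v => ?_)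
  have hexp : Real.exp (-Real.pi * (√(lam * t) * v) ^ 2) * Real.exp (-mu * t)
      = Real.exp (-(mu * (1 + Real.pi * lam / mu * v ^ 2) * t)) := by
    rw [← Real.exp_add, mul_pow, Real.sq_sqrt (by positivity)]
    congr 1
    field_simp
    ring
  dsimp only
  rw [← hexp, Real.sqrt_mul hlam]
  push_cast
  ring

lemma ofReal_sqrt_mul_cpow_neg_add_half {a b p : ℝ} (hb : 0 < b) (hp : 0 < p) (s : ℂ) :
    (√a : ℂ) * (b : ℂ) ^ (-(s + 1 / 2))
      = (p : ℂ) ^ (-(1 / 2) : ℂ) * (b : ℂ) ^ (-s) * (√(p * a / b) : ℂ) := by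
  have hb' : (b : ℂ) ≠ 0 := ofReal_ne_zero.2 hb.ne'
  have hsb : (√b : ℂ) ≠ 0 := ofReal_ne_zero.2 (Real.sqrt_pos.2 hb).ne'
  have hsp : (√p : ℂ) ≠ 0 := ofReal_ne_zero.2 (Real.sqrt_pos.2 hp).ne'
  rw [neg_add, cpow_add _ _ hb', cpow_neg _ (1 / 2), cpow_neg _ (1 / 2),
    ← ofReal_sqrt_eq_cpow hb.le, ← ofReal_sqrt_eq_cpow hp.le, Real.sqrt_div' _ hb.le,
    Real.sqrt_mul hp.le]
  push_cast
  field_simp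

/-- Mellin-type integral of the incomplete Gaussian error integral:
∫₀^∞ E(√(λt)) e^{−μt} t^{s−1} dt = (1/2)π^{−1/2}μ^{−s}Γ(s+1/2)·B̃(πλ/μ; 1/2, 1/2−s). -/
theorem mellin_error_integral (lam mu : ℝ) (hlam : 0 < lam) (hmu : 0 < mu)
    (s : ℂ) (hs : 0 < s.re) :
    ∫ t in Set.Ioi (0:ℝ),
        (((∫ u in (0:ℝ)..Real.sqrt (lam * t), Real.exp (-Real.pi * u ^ 2)) : ℝ) : ℂ)
          * Real.exp (-mu * t) * (t : ℂ) ^ (s - 1)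
      = (1 / 2) * (Real.pi : ℂ) ^ (-(1/2) : ℂ) * (mu : ℂ) ^ (-s)
          * Complex.Gamma (s + 1/2)
          * ∫ t in (0:ℝ)..(Real.pi * lam / mu),
              (t : ℂ) ^ ((1/2 : ℂ) - 1) * ((1 : ℂ) + t) ^ ((1/2 - s) - 1) := by
  set c := Real.pi * lam / mu
  have hc : 0 < c := by positivity
  have hr : ∀ v : ℝ, mu ≤ mu * (1 + c * v ^ 2) := fun v =>
    le_mul_of_one_le_right hmu.le (le_add_of_nonneg_right (by positivity))
  have hsplit : ∫ v in Ioc (0 : ℝ) 1, ((mu * (1 + c * v ^ 2) : ℝ) : ℂ) ^ (-(s + 1 / 2))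
      = (mu : ℂ) ^ (-(s + 1 / 2))
          * ∫ v in Ioc (0 : ℝ) 1, ((1 + c * v ^ 2 : ℝ) : ℂ) ^ (-(s + 1 / 2)) := by
    rw [← integral_const_mul]
    refine integral_congr_ae (ae_of_all _ fun v => ?_)
    dsimp only
    rw [ofReal_mul, mul_cpow_ofReal_nonneg hmu.le (by positivity)]
  rw [setIntegral_congr_fun measurableSet_Ioi fun t (ht : 0 < t) =>
      ofReal_integral_exp_neg_pi_mul_sq_mul_exp_mul_cpow hlam.le hmu ht.le s,
    integral_const_mul, integral_integral_sqrt_mul_exp_neg_mul_cpow (by fun_prop) hmu hr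
      (by linarith), hsplit, show (1 / 2 - s - 1 : ℂ) = -(s + 1 / 2) by ring,
    integral_cpow_neg_half_mul_one_add_cpow hc, mul_left_comm (Gamma _), ← mul_assoc,
    ofReal_sqrt_mul_cpow_neg_add_half hmu Real.pi_pos]
  ring
end

section
/- If Re(c) > Re(a+b) and c is not a nonpositive integer, then the hypergeometric series at z = 1 converges and ₂F₁(a, b; c; 1) = Γ(c)Γ(c−a−b)/(Γ(c−a)Γ(c−b)). -/
/-!
Telescoping the recurrence of the coefficients gives the contiguous relation
`c (c - a - b) F(a, b; c) = (c - a) (c - b) F(a, b; c + 1)`, and iterating it,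
`F(a, b; c) = (c - a)ₘ (c - b)ₘ / ((c)ₘ (c - a - b)ₘ) · F(a, b; c + m)` for every `m`.
As `m → ∞`, Gauss's product formula for `Γ`, in the form `(s)ₙ ~ n! n^(s - 1) / Γ(s)`, sends the
Pochhammer quotient to `Γ(c) Γ(c - a - b) / (Γ(c - a) Γ(c - b))`, while `F(a, b; c + m) → 1` by
dominated convergence. The same asymptotics give `(a)ₙ (b)ₙ / ((c)ₙ n!) = O(n^(Re(a + b - c) - 1))`,
hence absolute convergence and the vanishing of the boundary term of the telescoping.
-/

open Filter Topology Asymptotics Polynomial Complex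
open scoped Nat

theorem ascPochhammer_eval_succ_left {S : Type*} [CommSemiring S] (s : S) (n : ℕ) :
    (ascPochhammer S (n + 1)).eval s = s * (ascPochhammer S n).eval (s + 1) := by
  simp [ascPochhammer_succ_left]

theorem prod_range_add_natCast_eq_ascPochhammer_eval {S : Type*} [CommSemiring S] (s : S) (n : ℕ) :
    ∏ j ∈ Finset.range n, (s + j) = (ascPochhammer S n).eval s := by
  induction n with
  | zero => simp
  | succ n ih => rw [Finset.prod_range_succ, ih, ascPochhammer_succ_eval]

theorem ascPochhammer_eval_ne_zero {s : ℂ} (hs : ∀ k : ℕ, s ≠ -k) (n : ℕ) :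
    (ascPochhammer ℂ n).eval s ≠ 0 := by
  rw [Ne, ascPochhammer_eval_eq_zero_iff]
  rintro ⟨k, -, hk⟩
  exact hs k (by rw [hk, neg_neg])

theorem ne_neg_natCast_of_re_pos {s : ℂ} (hs : 0 < s.re) (k : ℕ) : s ≠ -k := by
  rintro rfl
  rw [neg_re, natCast_re] at hs
  linarith [k.cast_nonneg (α := ℝ)]

theorem norm_ascPochhammer_eval_le {R : Type*} [SeminormedRing R] [NormMulClass R] {x y : R}
    (h : ∀ j : ℕ, ‖x + j‖ ≤ ‖y + j‖) (n : ℕ) :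
    ‖(ascPochhammer R n).eval x‖ ≤ ‖(ascPochhammer R n).eval y‖ := by
  induction n with
  | zero => simp
  | succ n ih =>
    simp only [ascPochhammer_succ_eval, norm_mul]
    exact mul_le_mul ih (h n) (norm_nonneg _) (norm_nonneg _)

theorem tendsto_ascPochhammer_eval_div_factorial_mul_cpow (s : ℂ) :
    Tendsto (fun n : ℕ => (ascPochhammer ℂ n).eval s / (n ! * (n : ℂ) ^ (s - 1))) atTop
      (𝓝 (Gamma s)⁻¹) := by
  by_cases hs : ∃ k : ℕ, s = -k
  · obtain ⟨k, rfl⟩ := hs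
    rw [Gamma_neg_nat_eq_zero, inv_zero]
    refine tendsto_const_nhds.congr' ?_
    filter_upwards [eventually_gt_atTop k] with n hn
    rw [ascPochhammer_eval_neg_coe_nat_of_lt hn, zero_div]
  push Not at hs
  have hlim := (tendsto_natCast_div_add_atTop s).mul
    ((GammaSeq_tendsto_Gamma s).inv₀ (Gamma_ne_zero hs))
  rw [one_mul] at hlim
  refine hlim.congr' ?_
  filter_upwards [eventually_gt_atTop 0] with n hn
  have hn0 : (n : ℂ) ≠ 0 := Nat.cast_ne_zero.2 hn.ne'
  have hsn : (n : ℂ) + s ≠ 0 := fun h => hs n (by linear_combination h)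
  rw [GammaSeq, prod_range_add_natCast_eq_ascPochhammer_eval, ascPochhammer_succ_eval, inv_div,
    cpow_sub _ _ hn0, cpow_one]
  have : (n ! : ℂ) ≠ 0 := Nat.cast_ne_zero.2 n.factorial_ne_zero
  have : (n : ℂ) ^ s ≠ 0 := by simp [hn0]
  field_simp
  ring

theorem tendsto_ascPochhammer_ratio_mul_cpow (x y : ℂ) {z w : ℂ} (hz : ∀ k : ℕ, z ≠ -k)
    (hw : ∀ k : ℕ, w ≠ -k) :
    Tendsto (fun n : ℕ => (ascPochhammer ℂ n).eval x * (ascPochhammer ℂ n).eval y /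
        ((ascPochhammer ℂ n).eval z * (ascPochhammer ℂ n).eval w) * (n : ℂ) ^ (z + w - x - y))
      atTop (𝓝 (Gamma z * Gamma w / (Gamma x * Gamma y))) := by
  have hlim := ((tendsto_ascPochhammer_eval_div_factorial_mul_cpow x).mul
    (tendsto_ascPochhammer_eval_div_factorial_mul_cpow y)).div
    ((tendsto_ascPochhammer_eval_div_factorial_mul_cpow z).mul
    (tendsto_ascPochhammer_eval_div_factorial_mul_cpow w))
    (mul_ne_zero (inv_ne_zero (Gamma_ne_zero hz)) (inv_ne_zero (Gamma_ne_zero hw)))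
  rw [← mul_inv, ← mul_inv, inv_div_inv] at hlim
  refine hlim.congr' ?_
  filter_upwards [eventually_gt_atTop 0] with n hn
  have hn0 : (n : ℂ) ≠ 0 := Nat.cast_ne_zero.2 hn.ne'
  have : (n ! : ℂ) ≠ 0 := Nat.cast_ne_zero.2 n.factorial_ne_zero
  have hpow : (n : ℂ) ^ (z + w - x - y) =
      (n : ℂ) ^ (z - 1) * (n : ℂ) ^ (w - 1) / ((n : ℂ) ^ (x - 1) * (n : ℂ) ^ (y - 1)) := by
    rw [← cpow_add _ _ hn0, ← cpow_add _ _ hn0, ← cpow_sub _ _ hn0]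
    ring_nf
  have : ∀ s : ℂ, (n : ℂ) ^ s ≠ 0 := fun s => by simp [hn0]
  rw [Pi.div_apply, hpow]
  field_simp

theorem ordinaryHypergeometricCoefficient_eq_div {𝕂 : Type*} [Field 𝕂] (a b c : 𝕂) (n : ℕ) :
    ordinaryHypergeometricCoefficient a b c n = (ascPochhammer 𝕂 n).eval a *
      (ascPochhammer 𝕂 n).eval b / ((ascPochhammer 𝕂 n).eval c * n !) := by
  rw [ordinaryHypergeometricCoefficient, div_eq_mul_inv, mul_inv]
  ring

theorem tendsto_ordinaryHypergeometricCoefficient_mul_cpow (a b : ℂ) {c : ℂ}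
    (hc : ∀ k : ℕ, c ≠ -k) :
    Tendsto (fun n : ℕ => ordinaryHypergeometricCoefficient a b c n * (n : ℂ) ^ (c + 1 - a - b))
      atTop (𝓝 (Gamma c / (Gamma a * Gamma b))) := by
  have h := tendsto_ascPochhammer_ratio_mul_cpow a b hc (w := 1)
    (ne_neg_natCast_of_re_pos (by simp))
  simpa only [ascPochhammer_eval_one, Gamma_one, mul_one,
    ← ordinaryHypergeometricCoefficient_eq_div] using h

theorem ordinaryHypergeometricCoefficient_isBigO (a b : ℂ) {c : ℂ} (hc : ∀ k : ℕ, c ≠ -k) :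
    (fun n : ℕ => ordinaryHypergeometricCoefficient a b c n) =O[atTop]
      (fun n : ℕ => (n : ℝ) ^ ((a + b - c).re - 1)) := by
  set s := c + 1 - a - b
  have hbdd := (tendsto_ordinaryHypergeometricCoefficient_mul_cpow a b hc).isBigO_one ℝ
  have hexp : (-s).re = (a + b - c).re - 1 := by
    simp only [s, neg_re, sub_re, add_re, one_re]
    ring
  have hpow : (fun n : ℕ => (n : ℂ) ^ (-s)) =O[atTop]
      (fun n : ℕ => (n : ℝ) ^ ((a + b - c).re - 1)) := by
    refine IsBigO.of_bound 1 ?_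
    filter_upwards [eventually_gt_atTop 0] with n hn
    rw [norm_natCast_cpow_of_pos hn, Real.norm_of_nonneg (by positivity), one_mul, hexp]
  refine (hbdd.mul hpow).congr' ?_ ?_
  · filter_upwards [eventually_gt_atTop 0] with n hn
    rw [mul_assoc, ← cpow_add _ _ (Nat.cast_ne_zero.2 hn.ne'), add_neg_cancel, cpow_zero, mul_one]
  · exact Eventually.of_forall fun n => one_mul _

theorem summable_norm_ordinaryHypergeometricCoefficient {a b c : ℂ} (hc : ∀ k : ℕ, c ≠ -k)
    (h : (a + b).re < c.re) :
    Summable (fun n : ℕ => ‖ordinaryHypergeometricCoefficient a b c n‖) :=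
  summable_of_isBigO_nat (Real.summable_nat_rpow.2 (by simp only [sub_re]; linarith))
    (ordinaryHypergeometricCoefficient_isBigO a b hc).norm_left

theorem tendsto_natCast_mul_ordinaryHypergeometricCoefficient {a b c : ℂ} (hc : ∀ k : ℕ, c ≠ -k)
    (h : (a + b).re < c.re) :
    Tendsto (fun n : ℕ => (n : ℂ) * ordinaryHypergeometricCoefficient a b c n) atTop (𝓝 0) := by
  have hO := (isBigO_refl (fun n : ℕ => (n : ℂ)) atTop).norm_right.mul
    (ordinaryHypergeometricCoefficient_isBigO a b hc)
  refine hO.trans_tendsto ?_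
  have hneg : 0 < -(a + b - c).re := by simp only [sub_re]; linarith
  refine ((tendsto_rpow_neg_atTop hneg).comp tendsto_natCast_atTop_atTop).congr' ?_
  filter_upwards [eventually_gt_atTop 0] with n hn
  have : (0 : ℝ) < n := Nat.cast_pos.2 hn
  rw [Function.comp_apply, neg_neg, Complex.norm_natCast, Real.rpow_sub this, Real.rpow_one]
  field_simp

theorem tsum_sub_succ_eq_of_tendsto_zero {G : Type*} [AddCommGroup G] [TopologicalSpace G]
    [IsTopologicalAddGroup G] [T2Space G] {f : ℕ → G} (hf : Tendsto f atTop (𝓝 0))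
    (hs : Summable fun n => f n - f (n + 1)) : ∑' n, (f n - f (n + 1)) = f 0 := by
  refine tendsto_nhds_unique hs.hasSum.tendsto_sum_nat ?_
  simpa only [Finset.sum_range_sub', sub_zero] using tendsto_const_nhds.sub hf

theorem ordinaryHypergeometricCoefficient_contiguous (a b : ℂ) {c : ℂ} (hc : ∀ k : ℕ, c ≠ -k)
    (n : ℕ) :
    c * (c - a - b) * ordinaryHypergeometricCoefficient a b c n -
        (c - a) * (c - b) * ordinaryHypergeometricCoefficient a b (c + 1) n =
      c * n * ordinaryHypergeometricCoefficient a b c n -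
        c * (n + 1 : ℕ) * ordinaryHypergeometricCoefficient a b c (n + 1) := by
  have hc0 : c ≠ 0 := by simpa using hc 0
  have hcn : c + n ≠ 0 := fun h => hc n (by linear_combination h)
  have hPc := ascPochhammer_eval_ne_zero hc n
  have hPc1 : (ascPochhammer ℂ n).eval (c + 1) = (ascPochhammer ℂ n).eval c * (c + n) / c := by
    rw [eq_div_iff hc0, mul_comm, ← ascPochhammer_eval_succ_left, ascPochhammer_succ_eval]
  have : (n ! : ℂ) ≠ 0 := Nat.cast_ne_zero.2 n.factorial_ne_zero
  simp only [ordinaryHypergeometricCoefficient_eq_div, ascPochhammer_succ_eval, hPc1,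
    Nat.factorial_succ]
  push_cast
  field_simp
  ring

theorem tsum_ordinaryHypergeometricCoefficient_contiguous {a b c : ℂ} (hc : ∀ k : ℕ, c ≠ -k)
    (h : (a + b).re < c.re) :
    c * (c - a - b) * ∑' n, ordinaryHypergeometricCoefficient a b c n =
      (c - a) * (c - b) * ∑' n, ordinaryHypergeometricCoefficient a b (c + 1) n := by
  have hc1 : ∀ k : ℕ, c + 1 ≠ -k := fun k hk => hc (k + 1) (by push_cast; linear_combination hk)
  have hs := (summable_norm_ordinaryHypergeometricCoefficient hc h).of_norm
  have h1 : (a + b).re < (c + 1).re := by rw [add_re c, one_re]; linarith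
  have hs1 := (summable_norm_ordinaryHypergeometricCoefficient hc1 h1).of_norm
  have hB : Tendsto (fun n : ℕ => c * n * ordinaryHypergeometricCoefficient a b c n) atTop
      (𝓝 0) := by
    simpa only [mul_assoc, mul_zero] using
      (tendsto_natCast_mul_ordinaryHypergeometricCoefficient hc h).const_mul c
  have hsub := (hs.mul_left (c * (c - a - b))).sub (hs1.mul_left ((c - a) * (c - b)))
  rw [← sub_eq_zero, ← tsum_mul_left, ← tsum_mul_left,
    ← (hs.mul_left _).tsum_sub (hs1.mul_left _)]
  simp_rw [ordinaryHypergeometricCoefficient_contiguous a b hc] at hsub ⊢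
  rw [tsum_sub_succ_eq_of_tendsto_zero hB hsub]
  simp

theorem ascPochhammer_mul_tsum_ordinaryHypergeometricCoefficient {a b c : ℂ}
    (hc : ∀ k : ℕ, c ≠ -k) (h : (a + b).re < c.re) (m : ℕ) :
    (ascPochhammer ℂ m).eval c * (ascPochhammer ℂ m).eval (c - a - b) *
        ∑' n, ordinaryHypergeometricCoefficient a b c n =
      (ascPochhammer ℂ m).eval (c - a) * (ascPochhammer ℂ m).eval (c - b) *
        ∑' n, ordinaryHypergeometricCoefficient a b (c + m) n := by
  induction m with
  | zero => simp
  | succ m ih =>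
    have hcm : ∀ k : ℕ, c + m ≠ -k := fun k hk => hc (k + m) (by push_cast; linear_combination hk)
    have hcontig := tsum_ordinaryHypergeometricCoefficient_contiguous (a := a) (b := b) hcm
      (by rw [add_re c, natCast_re]; linarith [m.cast_nonneg (α := ℝ)])
    rw [Nat.cast_succ, ← add_assoc]
    simp only [ascPochhammer_succ_eval]
    linear_combination (c + m) * (c - a - b + m) * ih +
      (ascPochhammer ℂ m).eval (c - a) * (ascPochhammer ℂ m).eval (c - b) * hcontig

theorem tendsto_inv_ascPochhammer_eval_add_natCast (c : ℂ) {n : ℕ} (hn : n ≠ 0) :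
    Tendsto (fun m : ℕ => ((ascPochhammer ℂ n).eval (c + m))⁻¹) atTop (𝓝 0) := by
  have hdeg : 0 < (ascPochhammer ℂ n).degree := by
    rw [degree_eq_natDegree (monic_ascPochhammer ℂ n).ne_zero, ascPochhammer_natDegree]
    exact_mod_cast Nat.pos_of_ne_zero hn
  have hcm : Tendsto (fun m : ℕ => ‖c + m‖) atTop atTop :=
    tendsto_norm_cobounded_atTop.comp
      ((tendsto_const_add_cobounded c).comp tendsto_natCast_atTop_cobounded)
  rw [tendsto_zero_iff_norm_tendsto_zero]
  simp only [norm_inv]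
  exact ((ascPochhammer ℂ n).tendsto_norm_atTop hdeg hcm).inv_tendsto_atTop

theorem norm_ordinaryHypergeometricCoefficient_le {a b c a' b' c' : ℂ}
    (ha : ∀ j : ℕ, ‖a + j‖ ≤ ‖a' + j‖) (hb : ∀ j : ℕ, ‖b + j‖ ≤ ‖b' + j‖)
    (hc : ∀ j : ℕ, ‖c' + j‖ ≤ ‖c + j‖) (hc' : ∀ k : ℕ, c' ≠ -k) (n : ℕ) :
    ‖ordinaryHypergeometricCoefficient a b c n‖ ≤
      ‖ordinaryHypergeometricCoefficient a' b' c' n‖ := by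
  simp only [ordinaryHypergeometricCoefficient_eq_div, norm_div, norm_mul]
  have hfac : 0 < ‖(n ! : ℂ)‖ := norm_pos_iff.2 (Nat.cast_ne_zero.2 n.factorial_ne_zero)
  have hc'n : 0 < ‖(ascPochhammer ℂ n).eval c'‖ := norm_pos_iff.2 (ascPochhammer_eval_ne_zero hc' n)
  refine div_le_div₀ (by positivity) ?_ (by positivity) ?_
  · exact mul_le_mul (norm_ascPochhammer_eval_le ha n) (norm_ascPochhammer_eval_le hb n)
      (norm_nonneg _) (norm_nonneg _)
  · exact mul_le_mul_of_nonneg_right (norm_ascPochhammer_eval_le hc n) hfac.le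

theorem tendsto_tsum_ordinaryHypergeometricCoefficient_add_natCast (a b c : ℂ) :
    Tendsto (fun m : ℕ => ∑' n, ordinaryHypergeometricCoefficient a b (c + m) n) atTop
      (𝓝 1) := by
  have hnorm (x : ℝ) (hx : 0 ≤ x) (j : ℕ) : ‖(x : ℂ) + j‖ = x + j := by
    rw [← ofReal_natCast, ← ofReal_add, Complex.norm_of_nonneg (by positivity)]
  obtain ⟨m₀, hm₀⟩ := exists_nat_gt (‖a‖ + ‖b‖ - c.re)
  set r := c.re + m₀
  have hr : 0 < r := by linarith [norm_nonneg a, norm_nonneg b]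
  -- For `m ≥ m₀` the terms are dominated by those of `F(‖a‖, ‖b‖; r)`, convergent as `‖a‖ + ‖b‖ < r`.
  have hbound := summable_norm_ordinaryHypergeometricCoefficient (a := ‖a‖) (b := ‖b‖)
    (ne_neg_natCast_of_re_pos (s := r) hr) (by simp only [add_re, ofReal_re]; linarith)
  have hlim : Tendsto (fun m : ℕ => ∑' n, ordinaryHypergeometricCoefficient a b (c + m) n) atTop
      (𝓝 (∑' n : ℕ, if n = 0 then 1 else 0)) :=
    tendsto_tsum_of_dominated_convergence hbound ?_ ?_
  · rwa [tsum_ite_eq] at hlim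
  · rintro (_ | n)
    · simp [ordinaryHypergeometricCoefficient]
    · simpa only [ordinaryHypergeometricCoefficient, mul_zero, Nat.add_one_ne_zero, if_false]
        using (tendsto_inv_ascPochhammer_eval_add_natCast c n.add_one_ne_zero).const_mul _
  · filter_upwards [eventually_ge_atTop m₀] with m hm n
    refine norm_ordinaryHypergeometricCoefficient_le (fun j => ?_) (fun j => ?_) (fun j => ?_)
      (ne_neg_natCast_of_re_pos hr) n
    · rw [hnorm _ (norm_nonneg a)]
      exact (norm_add_le _ _).trans_eq (by rw [Complex.norm_natCast])
    · rw [hnorm _ (norm_nonneg b)]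
      exact (norm_add_le _ _).trans_eq (by rw [Complex.norm_natCast])
    · rw [hnorm _ hr.le]
      refine le_trans ?_ (re_le_norm _)
      simp only [add_re, natCast_re]
      linarith [(Nat.cast_le (α := ℝ)).2 hm]

theorem tsum_ordinaryHypergeometricCoefficient_eq_Gamma {a b c : ℂ} (hc : ∀ k : ℕ, c ≠ -k)
    (h : (a + b).re < c.re) :
    ∑' n, ordinaryHypergeometricCoefficient a b c n =
      Gamma c * Gamma (c - a - b) / (Gamma (c - a) * Gamma (c - b)) := by
  have hcab : ∀ k : ℕ, c - a - b ≠ -k :=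
    ne_neg_natCast_of_re_pos (by simp only [sub_re, add_re] at h ⊢; linarith)
  have hratio := tendsto_ascPochhammer_ratio_mul_cpow (c - a) (c - b) hc hcab
  rw [show c + (c - a - b) - (c - a) - (c - b) = 0 by ring] at hratio
  simp only [cpow_zero, mul_one] at hratio
  have hlim := hratio.mul (tendsto_tsum_ordinaryHypergeometricCoefficient_add_natCast a b c)
  rw [mul_one] at hlim
  refine tendsto_nhds_unique (tendsto_const_nhds.congr fun m => ?_) hlim
  rw [div_mul_eq_mul_div, eq_div_iff (mul_ne_zero (ascPochhammer_eval_ne_zero hc m)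
    (ascPochhammer_eval_ne_zero hcab m)), mul_comm]
  exact ascPochhammer_mul_tsum_ordinaryHypergeometricCoefficient hc h m

/-- Gauss's summation theorem: if Re(c) > Re(a+b) and c is not a nonpositive integer,
the hypergeometric series at z = 1 converges and equals Γ(c)Γ(c−a−b)/(Γ(c−a)Γ(c−b)). -/
theorem gauss_hypergeometric_sum (a b c : ℂ) (hc : ∀ n : ℕ, c ≠ -(n : ℂ))
    (h : (a + b).re < c.re) :
    Summable (fun n : ℕ => (ascPochhammer ℂ n).eval a * (ascPochhammer ℂ n).eval b /
      ((ascPochhammer ℂ n).eval c * (n.factorial : ℂ))) ∧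
    ∑' n : ℕ, (ascPochhammer ℂ n).eval a * (ascPochhammer ℂ n).eval b /
        ((ascPochhammer ℂ n).eval c * (n.factorial : ℂ))
      = Complex.Gamma c * Complex.Gamma (c - a - b) /
          (Complex.Gamma (c - a) * Complex.Gamma (c - b)) := by
  simp only [← ordinaryHypergeometricCoefficient_eq_div]
  exact ⟨(summable_norm_ordinaryHypergeometricCoefficient hc h).of_norm,
    tsum_ordinaryHypergeometricCoefficient_eq_Gamma hc h⟩
end
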